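/- arXiv:1901.09797 — 9 statements merged into one kernel-verified Lean document; each statement's English description precedes it below -/
import Mathlib

section
/- Let U be a p×n integer matrix of rank r and F a p×r integer matrix whose columns generate a submodule containing the column span (over ℤ) of U, so that there is a unique r×n integer matrix V with U = FV. Then the columns of F form a ℤ-basis of the ℤ-module generated by the columns of U if and only if the rows of V form a ℤ-basis of the lattice ℝ-span(rows of U) ∩ ℤⁿ. -/
open Matrix

def colSpanZ {p n : ℕ} (U : Matrix (Fin p) (Fin n) ℤ) : Submodule ℤ (Fin p → ℤ) :=
  Submodule.span ℤ (Set.range fun j => fun i => U i j)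

def colSpanR {p n : ℕ} (U : Matrix (Fin p) (Fin n) ℤ) : Submodule ℝ (Fin p → ℝ) :=
  Submodule.span ℝ (Set.range fun j => fun i => (U i j : ℝ))

noncomputable def castLM (m : ℕ) : (Fin m → ℤ) →ₗ[ℤ] (Fin m → ℝ) :=
  LinearMap.pi fun i => (Algebra.linearMap ℤ ℝ).comp (LinearMap.proj i)

noncomputable def satOf {m : ℕ} (S : Submodule ℝ (Fin m → ℝ)) : Submodule ℤ (Fin m → ℤ) :=
  (S.restrictScalars ℤ).comap (castLM m)

def IsZBasis {ι V : Type*} [AddCommGroup V] [Module ℤ V] (f : ι → V) (L : Submodule ℤ V) : Prop :=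
  LinearIndependent ℤ f ∧ Submodule.span ℤ (Set.range f) = L

noncomputable def gramDet {p n : ℕ} (A : Matrix (Fin p) (Fin n) ℝ) (I : Finset (Fin n)) : ℝ :=
  ((A.submatrix id (fun j : ↥I => (j : Fin n)))ᵀ * A.submatrix id (fun j : ↥I => (j : Fin n))).det

noncomputable def covol {r q : ℕ} (f : Fin r → Fin q → ℝ) : ℝ :=
  Real.sqrt (Matrix.of fun a b => ∑ i, f a i * f b i).det

def rowSpanR {p n : ℕ} (U : Matrix (Fin p) (Fin n) ℤ) : Submodule ℝ (Fin n → ℝ) :=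
  Submodule.span ℝ (Set.range fun i => fun j => (U i j : ℝ))

/-! Since `U = F * V` has rank `r`, the columns of `F` and the rows of `V` are linearly
independent and `V` has the same real row space as `U`. Injectivity of `F` turns the left-hand
side into surjectivity of `V : ℤⁿ → ℤʳ`; independence of the rows of `V` turns the right-hand
side into saturation of their ℤ-span. A right inverse of `V` shows that surjectivity implies
saturation. Conversely, if the image of `V` is a proper sublattice, a character of the quotient
lifts to a rational vector `q` with `q ᵥ* V` integral but `q` not integral, and saturation
would write `q ᵥ* V` as an integral combination of the rows of `V`, forcing `q` integral. -/

open Submodule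

namespace Matrix

variable {K : Type*} [Field K] {m k n : Type*}

theorem linearIndependent_col_of_rank_eq_card [Fintype n] {A : Matrix m n K}
    (h : A.rank = Fintype.card n) : LinearIndependent K A.col := by
  rw [linearIndependent_iff_card_eq_finrank_span, Set.finrank, ← rank_eq_finrank_span_cols, h]

theorem linearIndependent_row_of_rank_eq_card [Fintype m] [Fintype n] {A : Matrix m n K}
    (h : A.rank = Fintype.card m) : LinearIndependent K A.row := by
  rw [← col_transpose]
  exact linearIndependent_col_of_rank_eq_card (by rwa [rank_transpose])

theorem mem_span_row_iff {R : Type*} [CommSemiring R] [Fintype m] {A : Matrix m n R}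
    {b : n → R} : b ∈ span R (Set.range A.row) ↔ ∃ d, d ᵥ* A = b := by
  rw [← range_vecMulLinear]
  rfl

theorem map_intCast_mul {R : Type*} [Ring R] [Fintype k] (A : Matrix m k ℤ) (B : Matrix k n ℤ) :
    (A * B).map (Int.cast : ℤ → R) = A.map (Int.cast : ℤ → R) * B.map (Int.cast : ℤ → R) :=
  Matrix.map_mul (f := Int.castRingHom R)

theorem intCast_comp_vecMul {R : Type*} [Ring R] [Fintype m] (x : m → ℤ) (A : Matrix m n ℤ) :
    Int.cast ∘ (x ᵥ* A) = (Int.cast ∘ x : m → R) ᵥ* A.map Int.cast :=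
  funext (RingHom.map_vecMul (Int.castRingHom R) A x)

variable [Fintype k] [Fintype n] {A : Matrix m k K} {B : Matrix k n K}

theorem linearIndependent_col_of_rank_mul_eq_card (h : (A * B).rank = Fintype.card k) :
    LinearIndependent K A.col :=
  linearIndependent_col_of_rank_eq_card <|
    A.rank_le_card_width.antisymm (h ▸ rank_mul_le_left A B)

theorem linearIndependent_row_of_rank_mul_eq_card [Fintype m]
    (h : (A * B).rank = Fintype.card k) : LinearIndependent K B.row :=
  linearIndependent_row_of_rank_eq_card <|
    B.rank_le_card_height.antisymm (h ▸ rank_mul_le_right A B)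

theorem span_row_mul_eq_of_rank_eq_card [Fintype m] (h : (A * B).rank = Fintype.card k) :
    span K (Set.range (A * B).row) = span K (Set.range B.row) := by
  have hle : span K (Set.range (A * B).row) ≤ span K (Set.range B.row) := by
    rw [← range_vecMulLinear, ← range_vecMulLinear]
    rintro _ ⟨x, rfl⟩
    exact ⟨x ᵥ* A, vecMul_vecMul x A B⟩
  refine eq_of_le_of_finrank_le hle ?_
  rw [← rank_eq_finrank_span_row, ← rank_eq_finrank_span_row, h]
  exact B.rank_le_card_height

end Matrix

open Matrix

theorem linearIndependent_int_of_real {ι κ : Type*} {v : ι → κ → ℤ}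
    (h : LinearIndependent ℝ fun i j => (v i j : ℝ)) : LinearIndependent ℤ v :=
  (h.restrict_scalars' ℤ).of_comp ((Algebra.linearMap ℤ ℝ).compLeft κ)

theorem exists_rat_dual_of_notMem {ι : Type*} [Fintype ι] {L : Submodule ℤ (ι → ℤ)}
    {a : ι → ℤ} (ha : a ∉ L) :
    ∃ q : ι → ℚ, (∀ x ∈ L, ∃ m : ℤ, ∑ i, (x i : ℚ) * q i = m) ∧
      ∀ m : ℤ, ∑ i, (a i : ℚ) * q i ≠ m := by
  classical
  obtain ⟨c, hc⟩ := CharacterModule.exists_character_apply_ne_zero_of_ne_zero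
    (a := L.mkQ a) (by simpa [Submodule.Quotient.mk_eq_zero] using ha)
  set φ : (ι → ℤ) →+ AddCircle (1 : ℚ) := (c : _ →+ _).comp L.mkQ.toAddMonoidHom
  choose q hq using fun i => QuotientAddGroup.mk_surjective (φ (Pi.single i 1))
  have hφ : ∀ x, φ x = ((∑ i, (x i : ℚ) * q i : ℚ) : AddCircle (1 : ℚ)) := by
    intro x
    conv_lhs => rw [← Finset.univ_sum_single x]
    simp only [map_sum, QuotientAddGroup.mk_sum, QuotientAddGroup.mk_int_mul]
    refine Finset.sum_congr rfl fun i _ => ?_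
    rw [hq, ← map_zsmul, ← Pi.single_smul', smul_eq_mul, mul_one]
  refine ⟨q, fun x hx => ?_, fun m hm => hc ?_⟩
  · have : φ x = 0 := by
      change c (L.mkQ x) = 0
      rw [Submodule.mkQ_apply, (Submodule.Quotient.mk_eq_zero L).2 hx, map_zero]
    obtain ⟨m, hm⟩ := (AddCircle.coe_eq_zero_iff _).1 ((hφ x).symm.trans this)
    exact ⟨m, by simpa using hm.symm⟩
  · change φ a = 0
    rw [hφ, hm]
    exact (AddCircle.coe_eq_zero_iff _).2 ⟨m, by simp⟩

section Lattices

variable {p r n : ℕ}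

theorem colSpanZ_eq_range_mulVecLin (A : Matrix (Fin p) (Fin n) ℤ) :
    colSpanZ A = LinearMap.range A.mulVecLin :=
  (range_mulVecLin A).symm

theorem rowSpanR_eq_span_row (A : Matrix (Fin p) (Fin n) ℤ) :
    rowSpanR A = span ℝ (Set.range (A.map (Int.cast : ℤ → ℝ)).row) :=
  rfl

theorem mem_satOf_rowSpanR_iff {A : Matrix (Fin p) (Fin n) ℤ} {b : Fin n → ℤ} :
    b ∈ satOf (rowSpanR A) ↔ ∃ c : Fin p → ℝ, c ᵥ* A.map Int.cast = Int.cast ∘ b := by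
  rw [satOf, mem_comap, restrictScalars_mem, rowSpanR_eq_span_row, mem_span_row_iff]
  rfl

theorem span_row_le_satOf_rowSpanR (A : Matrix (Fin p) (Fin n) ℤ) :
    span ℤ (Set.range A.row) ≤ satOf (rowSpanR A) := by
  intro b hb
  obtain ⟨d, rfl⟩ := mem_span_row_iff.1 hb
  exact mem_satOf_rowSpanR_iff.2 ⟨Int.cast ∘ d, (intCast_comp_vecMul d A).symm⟩

theorem satOf_rowSpanR_le_of_colSpanZ_eq_top {V : Matrix (Fin r) (Fin n) ℤ}
    (h : colSpanZ V = ⊤) : satOf (rowSpanR V) ≤ span ℤ (Set.range V.row) := by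
  obtain ⟨W, hW⟩ := mulVec_surjective_iff_exists_right_inverse.1 <|
    LinearMap.range_eq_top.1 ((colSpanZ_eq_range_mulVecLin V).symm.trans h)
  intro b hb
  obtain ⟨c, hc⟩ := mem_satOf_rowSpanR_iff.1 hb
  have hc_int : c = Int.cast ∘ (b ᵥ* W) := calc
    c = c ᵥ* (V * W).map Int.cast := by simp [hW]
    _ = (Int.cast ∘ b) ᵥ* W.map Int.cast := by rw [map_intCast_mul, ← vecMul_vecMul, hc]
    _ = Int.cast ∘ (b ᵥ* W) := (intCast_comp_vecMul b W).symm
  refine mem_span_row_iff.2 ⟨b ᵥ* W, (Int.cast_injective (α := ℝ)).comp_left ?_⟩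
  change Int.cast ∘ (b ᵥ* W ᵥ* V) = Int.cast ∘ b
  rw [intCast_comp_vecMul, ← hc_int, hc]

theorem colSpanZ_eq_top_of_satOf_rowSpanR_le {V : Matrix (Fin r) (Fin n) ℤ}
    (hV : LinearIndependent ℝ (V.map (Int.cast : ℤ → ℝ)).row)
    (h : satOf (rowSpanR V) ≤ span ℤ (Set.range V.row)) : colSpanZ V = ⊤ := by
  by_contra hne
  obtain ⟨a, -, ha⟩ := SetLike.exists_of_lt (lt_top_iff_ne_top.2 hne)
  obtain ⟨q, hq_int, hq_a⟩ := exists_rat_dual_of_notMem ha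
  choose b hb using fun j => hq_int (V.col j) (subset_span ⟨j, rfl⟩)
  have hqV : (Rat.cast ∘ q : Fin r → ℝ) ᵥ* V.map Int.cast = Int.cast ∘ b := by
    funext j
    have := congrArg (Rat.cast : ℚ → ℝ) (hb j)
    push_cast at this
    simpa [vecMul, dotProduct, mul_comm] using this
  obtain ⟨d, hd⟩ := mem_span_row_iff.1 (h (mem_satOf_rowSpanR_iff.2 ⟨_, hqV⟩))
  have hqd : (Rat.cast ∘ q : Fin r → ℝ) = Int.cast ∘ d :=
    vecMul_injective_iff.2 hV (hqV.trans (by rw [← hd, intCast_comp_vecMul]))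
  have hq : q = Int.cast ∘ d :=
    funext fun i => Rat.cast_injective (α := ℝ) (by simpa using congrFun hqd i)
  exact hq_a (a ⬝ᵥ d) (by simp [hq, dotProduct])

theorem colSpanZ_eq_top_iff_satOf_rowSpanR_le {V : Matrix (Fin r) (Fin n) ℤ}
    (hV : LinearIndependent ℝ (V.map (Int.cast : ℤ → ℝ)).row) :
    colSpanZ V = ⊤ ↔ satOf (rowSpanR V) ≤ span ℤ (Set.range V.row) :=
  ⟨satOf_rowSpanR_le_of_colSpanZ_eq_top, colSpanZ_eq_top_of_satOf_rowSpanR_le hV⟩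

theorem isZBasis_col_iff_colSpanZ_eq_top {F : Matrix (Fin p) (Fin r) ℤ}
    (V : Matrix (Fin r) (Fin n) ℤ) (hF : LinearIndependent ℤ F.col) :
    IsZBasis F.col (colSpanZ (F * V)) ↔ colSpanZ V = ⊤ := by
  rw [IsZBasis, and_iff_right hF, ← range_mulVecLin, colSpanZ_eq_range_mulVecLin,
    colSpanZ_eq_range_mulVecLin, mulVecLin_mul, LinearMap.range_comp, ← Submodule.map_top,
    (map_injective_of_injective (mulVec_injective_iff.2 hF)).eq_iff, eq_comm]

theorem isZBasis_row_iff_satOf_rowSpanR_le {V : Matrix (Fin r) (Fin n) ℤ}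
    (hV : LinearIndependent ℤ V.row) :
    IsZBasis V.row (satOf (rowSpanR V)) ↔ satOf (rowSpanR V) ≤ span ℤ (Set.range V.row) := by
  rw [IsZBasis, and_iff_right hV]
  exact ⟨fun h => h.ge, (span_row_le_satOf_rowSpanR V).antisymm⟩

theorem rowSpanR_mul_of_rank_eq {F : Matrix (Fin p) (Fin r) ℤ} {V : Matrix (Fin r) (Fin n) ℤ}
    (h : ((F * V).map (Int.cast : ℤ → ℝ)).rank = r) : rowSpanR (F * V) = rowSpanR V := by
  rw [map_intCast_mul] at h
  rw [rowSpanR_eq_span_row, rowSpanR_eq_span_row, map_intCast_mul]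
  exact span_row_mul_eq_of_rank_eq_card (h.trans (Fintype.card_fin r).symm)

end Lattices

theorem columns_basis_iff_rows_basis_general {p n r : ℕ}
    (U : Matrix (Fin p) (Fin n) ℤ) (F : Matrix (Fin p) (Fin r) ℤ)
    (V : Matrix (Fin r) (Fin n) ℤ)
    (hrank : (U.map (Int.cast : ℤ → ℝ)).rank = r)
    (hUV : U = F * V) :
    IsZBasis (fun j => fun i => F i j) (colSpanZ U) ↔
      IsZBasis (fun i => V i) (satOf (rowSpanR U)) := by
  subst hUV
  have hrank' := (map_intCast_mul (R := ℝ) F V ▸ hrank).trans (Fintype.card_fin r).symm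
  have hFR := linearIndependent_col_of_rank_mul_eq_card hrank'
  have hVR := linearIndependent_row_of_rank_mul_eq_card hrank'
  rw [rowSpanR_mul_of_rank_eq hrank]
  exact (isZBasis_col_iff_colSpanZ_eq_top V (linearIndependent_int_of_real hFR)).trans <|
    (colSpanZ_eq_top_iff_satOf_rowSpanR_le hVR).trans
      (isZBasis_row_iff_satOf_rowSpanR_le (linearIndependent_int_of_real hVR)).symm

/-- the columns of `F` form a ℤ-basis of the ℤ-module generated by the
columns of `U` iff the rows of `V` form a ℤ-basis of `span_ℝ(rows of U) ∩ ℤⁿ`. -/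
theorem columns_basis_iff_rows_basis {p n r : ℕ}
    (U : Matrix (Fin p) (Fin n) ℤ) (F : Matrix (Fin p) (Fin r) ℤ)
    (V : Matrix (Fin r) (Fin n) ℤ)
    (hrank : (U.map (Int.cast : ℤ → ℝ)).rank = r)
    (hspan : colSpanZ U ≤ colSpanZ F)
    (hUV : U = F * V) :
    IsZBasis (fun j => fun i => F i j) (colSpanZ U) ↔
      IsZBasis (fun i => V i) (satOf (rowSpanR U)) :=
  columns_basis_iff_rows_basis_general U F V hrank hUV
end

section
/- Let U be a p×n integer matrix of rank r, F a p×r integer matrix, and V the unique r×n integer matrix with U = FV. If the columns of F form a ℤ-basis of ℤ⟨u⟩ (the ℤ-module generated by the columns of U), then for any subset I ⊆ {1,…,n} of size r, the Gram norm ‖u_I‖ := √det(U_Iᵀ U_I) satisfies ‖u_I‖ = ‖ℤ⟨u⟩‖ · |det(V_I)|, where ‖ℤ⟨u⟩‖ is the covolume of the lattice ℤ⟨u⟩. -/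
open Matrix

/-
Since `U = F V`, the columns of `U` indexed by `I` are `F V_I`, so the Gram matrix `U_Iᵀ U_I`
factors as `V_Iᵀ (Fᵀ F) V_I`. Taking determinants gives `det (U_Iᵀ U_I) = det (Fᵀ F) · det (V_I)²`,
and `√det (Fᵀ F)` is the covolume of the lattice spanned by the columns of `F`.
-/

theorem det_transpose_mul_self_mul_right {R m k : Type*} [CommRing R] [Fintype m] [Fintype k]
    [DecidableEq k] (F : Matrix m k R) (W : Matrix k k R) :
    ((F * W)ᵀ * (F * W)).det = (Fᵀ * F).det * W.det ^ 2 := by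
  rw [transpose_mul, Matrix.mul_assoc, ← Matrix.mul_assoc Fᵀ, ← Matrix.mul_assoc, det_mul, det_mul,
    det_transpose]
  ring

theorem gramDet_eq_det_reindex {p n r : ℕ} (A : Matrix (Fin p) (Fin n) ℝ) (I : Finset (Fin n))
    (e : Fin r ≃ I) :
    gramDet A I = ((A.submatrix id (fun a => (e a : Fin n)))ᵀ *
      A.submatrix id (fun a => (e a : Fin n))).det := by
  rw [gramDet, ← det_submatrix_equiv_self e]
  rfl

theorem covol_intCast_eq_sqrt_det {p r : ℕ} (F : Matrix (Fin p) (Fin r) ℤ) :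
    covol (fun a i => (F i a : ℝ)) =
      Real.sqrt ((F.map (Int.cast : ℤ → ℝ))ᵀ * F.map (Int.cast : ℤ → ℝ)).det :=
  rfl

theorem gram_norm_eq_covol_mul_det_general {p n r : ℕ}
    (U : Matrix (Fin p) (Fin n) ℤ) (F : Matrix (Fin p) (Fin r) ℤ)
    (V : Matrix (Fin r) (Fin n) ℤ)
    (hUV : U = F * V)
    (I : Finset (Fin n)) :
    ∀ e : Fin r ≃ ↥I,
      Real.sqrt (gramDet (U.map (Int.cast : ℤ → ℝ)) I)
        = covol (fun a => fun i => (F i a : ℝ)) *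
          |(((V.submatrix id (fun a => ((e a : ↥I) : Fin n))).det : ℤ) : ℝ)| := by
  intro e
  have hcols : (U.map (Int.cast : ℤ → ℝ)).submatrix id (fun a => (e a : Fin n)) =
      F.map (Int.cast : ℤ → ℝ) *
        (V.submatrix id (fun a => (e a : Fin n))).map (Int.cast : ℤ → ℝ) := by
    ext i a
    simp [hUV, mul_apply]
  rw [gramDet_eq_det_reindex _ I e, hcols, det_transpose_mul_self_mul_right,
    Real.sqrt_mul' _ (sq_nonneg _), Real.sqrt_sq_eq_abs, Int.cast_det, covol_intCast_eq_sqrt_det]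

/-- if the columns of `F` form a ℤ-basis of `ℤ⟨u⟩`, then for any `I` of size `r`,
`‖u_I‖ = ‖ℤ⟨u⟩‖ · |det V_I|` (the covolume of `ℤ⟨u⟩` being computed from the basis `F`). -/
theorem gram_norm_eq_covol_mul_det {p n r : ℕ}
    (U : Matrix (Fin p) (Fin n) ℤ) (F : Matrix (Fin p) (Fin r) ℤ)
    (V : Matrix (Fin r) (Fin n) ℤ)
    (hrank : (U.map (Int.cast : ℤ → ℝ)).rank = r)
    (hUV : U = F * V)
    (hF : IsZBasis (fun j => fun i => F i j) (colSpanZ U))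
    (I : Finset (Fin n)) (hI : I.card = r) :
    ∀ e : Fin r ≃ ↥I,
      Real.sqrt (gramDet (U.map (Int.cast : ℤ → ℝ)) I)
        = covol (fun a => fun i => (F i a : ℝ)) *
          |(((V.submatrix id (fun a => ((e a : ↥I) : Fin n))).det : ℤ) : ℝ)| :=
  gram_norm_eq_covol_mul_det_general U F V hUV I
end

section
/- The Kirchhoff polynomial of order k of a family u of n vectors in ℤᵖ depends only on the lattice ℤ⟨uᵀ⟩ generated by the rows of U; that is, if u and u' are two families of n vectors (in possibly different ℤᵖ, ℤᵖ') whose row spaces generate the same sublattice of ℤⁿ, then Kir_k(u;x) = Kir_k(u';x). -/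
open Matrix

def rowSpanZ {p n : ℕ} (U : Matrix (Fin p) (Fin n) ℤ) : Submodule ℤ (Fin n → ℤ) :=
  Submodule.span ℤ (Set.range fun i => U i)

/-!
A ℤ-basis `G` of the saturated lattice `⟨u⟩_ℤ` contains the columns of `U` in its span, so
`U = Gᵀ M` for an integer matrix `M` with `r` rows. The lattice `⟨u⟩_ℤ` is a direct summand
of `ℤᵖ` (the quotient is torsion-free, hence free), so `G` has an integral left inverse `W`;
then `M = W U` and `M` has the same row lattice as `U`. Since `U_I = Gᵀ M_I` with `M_I` square,
`‖u_I‖² = det(M_I)² ‖⟨u⟩_ℤ‖²`, hence `Kir_k(u;x) = ∑_I det(M_I)ᵏ xᴵ`. If `M'` arises in the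
same way from `u'`, then `M' = C M` and `M = D M'` with integer `C`, `D`; as soon as some
`det(M_I) ≠ 0` this forces `det D · det C = 1`, so `det C = ±1` and, `k` being even,
`det(M'_I)ᵏ = det(M_I)ᵏ` for every `I`.
-/

theorem Matrix.span_range_le_iff_exists_eq_mul {R l m n : Type*} [CommSemiring R] [Fintype m]
    (A : Matrix l n R) (B : Matrix m n R) :
    Submodule.span R (Set.range A.row) ≤ Submodule.span R (Set.range B.row) ↔
      ∃ C : Matrix l m R, A = C * B := by
  rw [← range_vecMulLinear B]
  constructor
  · intro h
    choose C hC using fun i => h (Submodule.subset_span ⟨i, rfl⟩)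
    exact ⟨of C, funext fun i => (hC i).symm⟩
  · rintro ⟨C, rfl⟩
    rw [Submodule.span_le]
    rintro _ ⟨i, rfl⟩
    exact ⟨C i, rfl⟩

theorem Submodule.exists_retraction_of_projective_quotient {R V : Type*} [Ring R]
    [AddCommGroup V] [Module R V] (L : Submodule R V) [Module.Projective R (V ⧸ L)] :
    ∃ π : V →ₗ[R] L, π ∘ₗ L.subtype = LinearMap.id :=
  ((Function.Exact.split_tfae (LinearMap.exact_subtype_mkQ L) L.injective_subtype
    L.mkQ_surjective).out 0 1).mp (L.mkQ.exists_rightInverse_of_surjective L.range_mkQ)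

theorem isTorsionFree_quotient_satOf {m : ℕ} (S : Submodule ℝ (Fin m → ℝ)) :
    Module.IsTorsionFree ℤ ((Fin m → ℤ) ⧸ satOf S) := by
  refine Module.isTorsionFree_iff_smul_eq_zero.2 fun {c y} h => ?_
  obtain ⟨y, rfl⟩ := Submodule.Quotient.mk_surjective _ y
  rw [← Submodule.Quotient.mk_smul, Submodule.Quotient.mk_eq_zero] at h
  rw [Submodule.Quotient.mk_eq_zero, or_iff_not_imp_left]
  intro hc
  have hcy : (c : ℝ) • castLM m y ∈ S := by
    rw [Int.cast_smul_eq_zsmul, ← map_zsmul]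
    exact h
  have hc' : (c : ℝ) ≠ 0 := Int.cast_ne_zero.2 hc
  simpa [satOf, smul_smul, hc'] using S.smul_mem (c : ℝ)⁻¹ hcy

theorem exists_mul_transpose_eq_one_of_isZBasis {m r : ℕ} (S : Submodule ℝ (Fin m → ℝ))
    (G : Fin r → Fin m → ℤ) (hG : IsZBasis G (satOf S)) :
    ∃ W : Matrix (Fin r) (Fin m) ℤ, W * (of G)ᵀ = 1 := by
  have := isTorsionFree_quotient_satOf S
  -- a finitely generated torsion-free ℤ-module is free, hence projective
  obtain ⟨π, hπ⟩ := (satOf S).exists_retraction_of_projective_quotient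
  let b : Module.Basis (Fin r) ℤ (satOf S) :=
    (Module.Basis.span hG.1).map (LinearEquiv.ofEq _ _ hG.2)
  refine ⟨LinearMap.toMatrix' (b.equivFun.toLinearMap ∘ₗ π), ?_⟩
  ext a c
  have hπb : π (G c) = b c := by
    simpa [b, Module.Basis.span_apply] using LinearMap.congr_fun hπ (b c)
  change (LinearMap.toMatrix' (b.equivFun.toLinearMap ∘ₗ π) *ᵥ G c) a = _
  rw [LinearMap.toMatrix'_mulVec, LinearMap.comp_apply, hπb]
  simp [Matrix.one_apply, eq_comm]

theorem exists_eq_transpose_mul_of_isZBasis {p n r : ℕ} (U : Matrix (Fin p) (Fin n) ℤ)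
    (G : Fin r → Fin p → ℤ) (hG : IsZBasis G (satOf (colSpanR U))) :
    ∃ M : Matrix (Fin r) (Fin n) ℤ, U = (of G)ᵀ * M ∧ rowSpanZ M = rowSpanZ U := by
  have hcols :
      Submodule.span ℤ (Set.range Uᵀ.row) ≤ Submodule.span ℤ (Set.range (of G).row) := by
    rw [Submodule.span_le]
    rintro _ ⟨j, rfl⟩
    exact hG.2.ge (Submodule.subset_span ⟨j, rfl⟩)
  obtain ⟨C, hC⟩ := (span_range_le_iff_exists_eq_mul Uᵀ (of G)).1 hcols
  obtain ⟨W, hW⟩ := exists_mul_transpose_eq_one_of_isZBasis _ G hG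
  have hU : U = (of G)ᵀ * Cᵀ := by rw [← transpose_transpose U, hC, transpose_mul]
  refine ⟨Cᵀ, hU, le_antisymm ((span_range_le_iff_exists_eq_mul Cᵀ U).2 ⟨W, ?_⟩)
    ((span_range_le_iff_exists_eq_mul U Cᵀ).2 ⟨_, hU⟩)⟩
  rw [hU, ← Matrix.mul_assoc, hW, Matrix.one_mul]

theorem span_range_map_intCast {q n : ℕ} (V : Matrix (Fin q) (Fin n) ℤ) :
    Submodule.span ℝ (Set.range (V.map (Int.cast : ℤ → ℝ)).row)
      = Submodule.span ℝ (castLM n '' rowSpanZ V) := by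
  rw [rowSpanZ, ← Submodule.map_coe, Submodule.map_span, Submodule.span_span_of_tower,
    ← Set.range_comp]
  rfl

theorem rank_map_intCast_eq_of_rowSpanZ_eq {p p' n : ℕ} {U : Matrix (Fin p) (Fin n) ℤ}
    {U' : Matrix (Fin p') (Fin n) ℤ} (h : rowSpanZ U = rowSpanZ U') :
    (U.map (Int.cast : ℤ → ℝ)).rank = (U'.map (Int.cast : ℤ → ℝ)).rank := by
  rw [rank_eq_finrank_span_row, rank_eq_finrank_span_row, span_range_map_intCast,
    span_range_map_intCast, h]

noncomputable def maximalMinor {R : Type*} [CommRing R] {r n : ℕ} (M : Matrix (Fin r) (Fin n) R)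
    (I : Finset (Fin n)) : R :=
  if h : I.card = r then (M.submatrix id (I.orderEmbOfFin h)).det else 0

section maximalMinor

variable {R : Type*} [CommRing R] {r n : ℕ}

theorem maximalMinor_mul (C : Matrix (Fin r) (Fin r) R) (M : Matrix (Fin r) (Fin n) R)
    (I : Finset (Fin n)) : maximalMinor (C * M) I = C.det * maximalMinor M I := by
  unfold maximalMinor
  split_ifs
  · exact det_mul C _
  · rw [mul_zero]

theorem maximalMinor_map {S : Type*} [CommRing S] (f : R →+* S) (M : Matrix (Fin r) (Fin n) R)
    (I : Finset (Fin n)) : maximalMinor (M.map f) I = f (maximalMinor M I) := by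
  unfold maximalMinor
  split_ifs
  · exact (f.map_det _).symm
  · rw [map_zero]

end maximalMinor

theorem pow_maximalMinor_eq_of_rowSpanZ_eq {r n k : ℕ} (hk : Even k)
    {M M' : Matrix (Fin r) (Fin n) ℤ} (h : rowSpanZ M = rowSpanZ M') (I : Finset (Fin n)) :
    maximalMinor M' I ^ k = maximalMinor M I ^ k := by
  obtain ⟨C, hC⟩ := (span_range_le_iff_exists_eq_mul M' M).1 h.ge
  obtain ⟨D, hD⟩ := (span_range_le_iff_exists_eq_mul M M').1 h.le
  rw [hC, maximalMinor_mul]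
  by_cases h0 : maximalMinor M I = 0
  · rw [h0, mul_zero]
  have hDC : D.det * C.det = 1 := by
    have hM := maximalMinor_mul (D * C) M I
    rw [Matrix.mul_assoc, ← hC, ← hD, det_mul] at hM
    exact mul_right_cancel₀ h0 (by rw [← hM, one_mul])
  rcases Int.isUnit_iff.1 (IsUnit.of_mul_eq_one_right _ hDC) with hC1 | hC1 <;>
    simp [hC1, hk.neg_pow]

theorem gramDet_transpose_mul {p n r : ℕ} (A : Matrix (Fin r) (Fin p) ℝ)
    (B : Matrix (Fin r) (Fin n) ℝ) {I : Finset (Fin n)} (hI : I.card = r) :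
    gramDet (Aᵀ * B) I = maximalMinor B I ^ 2 * (A * Aᵀ).det := by
  set X := (Aᵀ * B).submatrix id ((↑) : I → Fin n)
  set BI := B.submatrix id (I.orderEmbOfFin hI)
  set e : Fin r ≃ I := (I.orderIsoOfFin hI).toEquiv
  have hXe : X.submatrix id e = Aᵀ * BI := by
    rw [submatrix_submatrix]
    rfl
  have hgram : gramDet (Aᵀ * B) I = ((Aᵀ * BI)ᵀ * (Aᵀ * BI)).det := by
    rw [gramDet, ← det_submatrix_equiv_self e, ← hXe]
    rfl
  rw [hgram, maximalMinor, dif_pos hI, transpose_mul, transpose_transpose, Matrix.mul_assoc,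
    ← Matrix.mul_assoc A, det_mul, det_mul, det_transpose]
  ring

theorem det_mul_transpose_pos_of_mul_eq_one {m n : Type*} [Fintype m] [Fintype n]
    [DecidableEq m] (A : Matrix m n ℝ) (B : Matrix n m ℝ) (h : A * B = 1) :
    0 < (A * Aᵀ).det := by
  have hinj : Function.Injective A.vecMul := fun x y hxy => by
    simpa [vecMul_vecMul, h] using congrArg (· ᵥ* B) hxy
  simpa using (PosDef.mul_conjTranspose_self A hinj).det_pos

theorem covol_eq_sqrt_det {r q : ℕ} (A : Matrix (Fin r) (Fin q) ℝ) :
    covol A = √(A * Aᵀ).det :=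
  rfl

theorem sum_sqrt_gramDet_pow_div_covol_pow {p n r k : ℕ} (hk : Even k)
    (A : Matrix (Fin r) (Fin p) ℝ) (B : Matrix (Fin r) (Fin n) ℝ) (hA : 0 < (A * Aᵀ).det)
    (x : Fin n → ℝ) :
    1 / covol A ^ k * ∑ I ∈ Finset.univ.filter (fun I : Finset (Fin n) => I.card = r),
        √(gramDet (Aᵀ * B) I) ^ k * ∏ i ∈ I, x i
      = ∑ I ∈ Finset.univ.filter (fun I : Finset (Fin n) => I.card = r),
        maximalMinor B I ^ k * ∏ i ∈ I, x i := by
  obtain ⟨j, rfl⟩ := hk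
  have hsqrt : ∀ y : ℝ, 0 ≤ y → √y ^ (j + j) = y ^ j := fun y hy => by
    rw [← two_mul, pow_mul, Real.sq_sqrt hy]
  rw [covol_eq_sqrt_det, hsqrt _ hA.le, Finset.mul_sum]
  refine Finset.sum_congr rfl fun I hI => ?_
  rw [gramDet_transpose_mul A B (Finset.mem_filter.1 hI).2, hsqrt _ (by positivity)]
  field_simp
  ring

theorem kirchhoff_eq_sum_maximalMinor_pow {p n r k : ℕ} (hk : Even k)
    (U : Matrix (Fin p) (Fin n) ℤ) (G : Fin r → Fin p → ℤ) (hG : IsZBasis G (satOf (colSpanR U)))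
    (M : Matrix (Fin r) (Fin n) ℤ) (hUM : U = (of G)ᵀ * M) (x : Fin n → ℝ) :
    (1 / covol (fun a => fun i => (G a i : ℝ)) ^ k) *
        ∑ I ∈ Finset.univ.filter (fun I : Finset (Fin n) => I.card = r),
          √(gramDet (U.map (Int.cast : ℤ → ℝ)) I) ^ k * ∏ i ∈ I, x i
      = ∑ I ∈ Finset.univ.filter (fun I : Finset (Fin n) => I.card = r),
          ((maximalMinor M I : ℤ) : ℝ) ^ k * ∏ i ∈ I, x i := by
  obtain ⟨W, hW⟩ := exists_mul_transpose_eq_one_of_isZBasis _ G hG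
  set A := (of G).map (Int.castRingHom ℝ)
  have hA : 0 < (A * Aᵀ).det := by
    refine det_mul_transpose_pos_of_mul_eq_one A (Wᵀ.map (Int.castRingHom ℝ)) ?_
    rw [← Matrix.map_mul, ← transpose_transpose (of G), ← transpose_mul, hW, transpose_one,
      Matrix.map_one _ (map_zero _) (map_one _)]
  have hU : U.map (Int.castRingHom ℝ) = Aᵀ * M.map (Int.castRingHom ℝ) := by
    rw [hUM, Matrix.map_mul, transpose_map]
  calc _ = _ := hU ▸ sum_sqrt_gramDet_pow_div_covol_pow hk A (M.map (Int.castRingHom ℝ)) hA x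
    _ = _ := Finset.sum_congr rfl fun I _ => by rw [maximalMinor_map]; rfl

/-- the Kirchhoff polynomial of order `k` only depends on the lattice
generated by the rows of `U`.  Covolumes of the saturated lattices `⟨u⟩_ℤ`, `⟨u'⟩_ℤ`
are computed from given ℤ-bases `G`, `G'`. -/
theorem kirchhoff_depends_only_on_row_lattice {p p' n r r' k : ℕ} (hk : Even k)
    (U : Matrix (Fin p) (Fin n) ℤ) (U' : Matrix (Fin p') (Fin n) ℤ)
    (hr : (U.map (Int.cast : ℤ → ℝ)).rank = r)
    (hr' : (U'.map (Int.cast : ℤ → ℝ)).rank = r')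
    (hrow : rowSpanZ U = rowSpanZ U')
    (G : Fin r → (Fin p → ℤ)) (hG : IsZBasis G (satOf (colSpanR U)))
    (G' : Fin r' → (Fin p' → ℤ)) (hG' : IsZBasis G' (satOf (colSpanR U')))
    (x : Fin n → ℝ) :
    (1 / covol (fun a => fun i => (G a i : ℝ)) ^ k) *
        ∑ I ∈ Finset.univ.filter (fun I : Finset (Fin n) => I.card = r),
          Real.sqrt (gramDet (U.map (Int.cast : ℤ → ℝ)) I) ^ k * ∏ i ∈ I, x i
      = (1 / covol (fun a => fun i => (G' a i : ℝ)) ^ k) *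
        ∑ I ∈ Finset.univ.filter (fun I : Finset (Fin n) => I.card = r'),
          Real.sqrt (gramDet (U'.map (Int.cast : ℤ → ℝ)) I) ^ k * ∏ i ∈ I, x i := by
  obtain rfl : r = r' := hr.symm.trans ((rank_map_intCast_eq_of_rowSpanZ_eq hrow).trans hr')
  obtain ⟨M, hUM, hMU⟩ := exists_eq_transpose_mul_of_isZBasis U G hG
  obtain ⟨M', hUM', hMU'⟩ := exists_eq_transpose_mul_of_isZBasis U' G' hG'
  rw [kirchhoff_eq_sum_maximalMinor_pow hk U G hG M hUM x,
    kirchhoff_eq_sum_maximalMinor_pow hk U' G' hG' M' hUM' x]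
  refine Finset.sum_congr rfl fun I _ => ?_
  rw [← Int.cast_pow, ← Int.cast_pow,
    pow_maximalMinor_eq_of_rowSpanZ_eq hk (hMU.trans (hrow.trans hMU'.symm)) I]
end

section
/- If u is a family of n vectors in ℤᵖ of rank r and I ⊆ {1,…,n} has size r with u_I linearly independent, then ‖u_I‖/‖⟨u⟩_ℤ‖ equals the index [⟨u⟩_ℤ : ℤ⟨u_I⟩] of the sublattice generated by u_I inside the saturated lattice ⟨u⟩_ℤ = span_ℝ(u) ∩ ℤᵖ. -/
open Matrix

/-- The index `[A : B]` of a ℤ-submodule `B` inside `A`. -/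
noncomputable def subIndex {m : ℕ} (A B : Submodule ℤ (Fin m → ℤ)) : ℕ :=
  Nat.card (↥A ⧸ Submodule.comap A.subtype B)

lemma int_span_singleton_toAddSubgroup (a : ℤ) :
    (Ideal.span ({a} : Set ℤ)).toAddSubgroup = AddSubgroup.zmultiples a := by
  ext x
  simp [Ideal.mem_span_singleton, AddSubgroup.mem_zmultiples_iff, Dvd.dvd, mul_comm, eq_comm]

lemma nat_card_quot_eq_index {M : Type*} [AddCommGroup M] (N : Submodule ℤ M) :
    Nat.card (M ⧸ N) = N.toAddSubgroup.index := rfl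

lemma index_span_eq_natAbs_det {M : Type*} [AddCommGroup M] {r : ℕ}
    (b : Module.Basis (Fin r) ℤ M) (v : Fin r → M) (hv : LinearIndependent ℤ v) :
    Nat.card (M ⧸ Submodule.span ℤ (Set.range v)) = (b.det v).natAbs := by
  classical
  set N := Submodule.span ℤ (Set.range v) with hN
  let vB : Module.Basis (Fin r) ℤ N := Module.Basis.span hv
  obtain ⟨n, snf⟩ := N.smithNormalForm b
  have hn : n = r := by
    have e := snf.bN.indexEquiv vB
    simpa using Fintype.card_congr e
  subst hn
  have hfbij : Function.Bijective snf.f := (Finite.injective_iff_bijective).mp snf.f.injective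
  let fe : Fin n ≃ Fin n := Equiv.ofBijective _ hfbij
  have hidx : Nat.card (M ⧸ N) = ∏ i, (snf.a i).natAbs := by
    rw [nat_card_quot_eq_index, snf.toAddSubgroup_index_eq_pow_mul_prod]
    simp [int_span_singleton_toAddSubgroup, Int.index_zmultiples]
  rw [hidx]
  set T : Matrix (Fin n) (Fin n) ℤ := snf.bN.toMatrix vB with hT
  have hvsum : ∀ j, v j = ∑ k, T k j • (snf.bN k : M) := by
    intro j
    calc v j = ((vB j : N) : M) := (congrArg Subtype.val (Module.Basis.span_apply hv j)).symm
    _ = ∑ k, T k j • (snf.bN k : M) := by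
        rw [← snf.bN.sum_repr (vB j)]
        push_cast
        rfl
  have h1 : b.toMatrix v = b.toMatrix (fun i => (snf.bN i : M)) * T := by
    ext i j
    rw [Module.Basis.toMatrix_apply, hvsum j, map_sum, mul_apply]
    simp [Module.Basis.toMatrix_apply, mul_comm]
  have h2 : b.toMatrix (fun i => (snf.bN i : M))
      = b.toMatrix (fun i => snf.bM (snf.f i)) * diagonal snf.a := by
    ext i j
    rw [Module.Basis.toMatrix_apply, snf.snf j, _root_.map_smul, mul_diagonal, Module.Basis.toMatrix_apply]
    simp [mul_comm]
  have hbMf : (fun i => snf.bM (snf.f i)) = ⇑(snf.bM.reindex fe.symm) := by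
    funext i
    simp [fe]
  have hunitT : IsUnit T.det := by
    have : Invertible T := snf.bN.invertibleToMatrix vB
    exact isUnit_det_of_invertible T
  have hunitP : IsUnit (b.toMatrix (fun i => snf.bM (snf.f i))).det := by
    rw [hbMf]
    have : Invertible (b.toMatrix ⇑(snf.bM.reindex fe.symm)) := b.invertibleToMatrix (snf.bM.reindex fe.symm)
    exact isUnit_det_of_invertible _
  rw [Module.Basis.det_apply, h1, h2, det_mul, det_mul, det_diagonal, Int.natAbs_mul, Int.natAbs_mul,
    Int.isUnit_iff_natAbs_eq.mp hunitT, Int.isUnit_iff_natAbs_eq.mp hunitP, one_mul, mul_one]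
  exact (map_prod Int.natAbsHom snf.a Finset.univ).symm

/-- for `I` of size `r` with `u_I` independent,
`‖u_I‖/‖⟨u⟩_ℤ‖ = [⟨u⟩_ℤ : ℤ⟨u_I⟩]`; the covolume of `⟨u⟩_ℤ = span_ℝ(u) ∩ ℤᵖ` is
computed from a given ℤ-basis `G`. -/
theorem gram_norm_div_covol_eq_index {p n r : ℕ}
    (U : Matrix (Fin p) (Fin n) ℤ)
    (hr : (U.map (Int.cast : ℤ → ℝ)).rank = r)
    (G : Fin r → (Fin p → ℤ)) (hG : IsZBasis G (satOf (colSpanR U)))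
    (I : Finset (Fin n)) (hI : I.card = r)
    (hind : LinearIndependent ℝ (fun j : ↥I => fun i => (U i (j : Fin n) : ℝ))) :
    Real.sqrt (gramDet (U.map (Int.cast : ℤ → ℝ)) I)
      = covol (fun a => fun i => (G a i : ℝ)) *
        (subIndex (satOf (colSpanR U))
          (Submodule.span ℤ (Set.range fun j : ↥I => fun i => U i (j : Fin n))) : ℝ) := by
  classical
  set A := satOf (colSpanR U) with hA
  -- basis of A from G
  let bA : Module.Basis (Fin r) ℤ ↥A := (Module.Basis.span hG.1).map (LinearEquiv.ofEq _ _ hG.2)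
  have hbA : ∀ a, (bA a : Fin p → ℤ) = G a := by
    intro a
    show ((LinearEquiv.ofEq _ _ hG.2) (Module.Basis.span hG.1 a) : Fin p → ℤ) = G a
    rw [LinearEquiv.coe_ofEq_apply]
    exact congrArg Subtype.val (Module.Basis.span_apply hG.1 a)
  -- columns of U lie in A
  have hcol : ∀ j : Fin n, (fun i => U i j) ∈ A := by
    intro j
    show castLM p (fun i => U i j) ∈ (colSpanR U).restrictScalars ℤ
    have hc : castLM p (fun i => U i j) = fun i => (U i j : ℝ) := rfl
    rw [hc]
    exact Submodule.subset_span ⟨j, rfl⟩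
  let eI : Fin r ≃ ↥I := (I.equivFinOfCardEq hI).symm
  let v : Fin r → ↥A := fun k => ⟨fun i => U i ((eI k : Fin n)), hcol _⟩
  -- linear independence of v over ℤ
  have hindZ : LinearIndependent ℤ (fun j : ↥I => fun i => (U i (j : Fin n) : ℝ)) :=
    hind.restrict_scalars (by
      intro a b h
      simpa using h)
  let ψ : ↥A →ₗ[ℤ] (Fin p → ℝ) := (castLM p).comp (A.subtype)
  have hvind : LinearIndependent ℤ v := by
    apply LinearIndependent.of_comp ψ
    have h2 := hindZ.comp eI eI.injective
    exact h2
  -- identify the comap with the span of v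
  have hcomap : Submodule.comap A.subtype
      (Submodule.span ℤ (Set.range fun j : ↥I => fun i => U i (j : Fin n)))
      = Submodule.span ℤ (Set.range v) := by
    have hmap : Submodule.map A.subtype (Submodule.span ℤ (Set.range v))
        = Submodule.span ℤ (Set.range fun j : ↥I => fun i => U i (j : Fin n)) := by
      rw [Submodule.map_span]
      congr 1
      ext x
      constructor
      · rintro ⟨-, ⟨k, rfl⟩, rfl⟩
        exact ⟨eI k, rfl⟩
      · rintro ⟨j, rfl⟩
        exact ⟨v (eI.symm j), ⟨eI.symm j, rfl⟩, by simp [v]⟩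
    rw [← hmap, Submodule.comap_map_eq_of_injective (Submodule.injective_subtype A)]
  set C : Matrix (Fin r) (Fin r) ℤ := bA.toMatrix v with hC
  have hidx : subIndex A
      (Submodule.span ℤ (Set.range fun j : ↥I => fun i => U i (j : Fin n))) = C.det.natAbs := by
    rw [subIndex, hcomap, index_span_eq_natAbs_det bA v hvind, Module.Basis.det_apply]
  -- column decomposition over ℤ
  have hvsum : ∀ k, (fun i => U i ((eI k : Fin n))) = ∑ a, C a k • G a := by
    intro k
    have h := bA.sum_repr (v k)
    have h2 : ((∑ a, bA.repr (v k) a • bA a : ↥A) : Fin p → ℤ) = ((v k : ↥A) : Fin p → ℤ) :=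
      congrArg _ h
    push_cast at h2
    simp only [hbA] at h2
    exact h2.symm
  -- real matrices
  set Gr : Matrix (Fin p) (Fin r) ℝ := Matrix.of fun i a => (G a i : ℝ) with hGr
  set Cr : Matrix (Fin r) (Fin r) ℝ := C.map (Int.cast : ℤ → ℝ) with hCr
  set W : Matrix (Fin p) ↥I ℝ :=
    (U.map (Int.cast : ℤ → ℝ)).submatrix id (fun j : ↥I => (j : Fin n)) with hW
  have hWsub : W.submatrix id eI = Gr * Cr := by
    ext i k
    have h := congrFun (hvsum k) i
    simp only [Finset.sum_apply, Pi.smul_apply, smul_eq_mul] at h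
    simp only [hW, Matrix.submatrix_apply, Matrix.map_apply, id, Matrix.mul_apply, hGr, hCr,
      Matrix.of_apply]
    rw [h]
    push_cast
    exact Finset.sum_congr rfl (fun a _ => mul_comm _ _)

  have hgram : gramDet (U.map (Int.cast : ℤ → ℝ)) I
      = ((W.submatrix id eI)ᵀ * (W.submatrix id eI)).det := by
    rw [gramDet, ← Matrix.det_submatrix_equiv_self eI (Wᵀ * W)]
    congr 1
  have hdet2 : ((Gr * Cr)ᵀ * (Gr * Cr)).det = ((C.det : ℝ))^2 * (Grᵀ * Gr).det := by
    have hCrdet : Cr.det = (C.det : ℝ) := by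
      simpa using (RingHom.map_det (Int.castRingHom ℝ) C).symm
    rw [Matrix.transpose_mul, Matrix.mul_assoc, ← Matrix.mul_assoc Grᵀ, det_mul, det_mul,
      det_transpose, hCrdet]
    ring
  have hcovol : covol (fun a => fun i => (G a i : ℝ)) = Real.sqrt (Grᵀ * Gr).det := by
    rw [covol]
    congr 2
  rw [hgram, hWsub, hdet2, Real.sqrt_mul (sq_nonneg _), Real.sqrt_sq_eq_abs, hcovol, hidx]
  rw [Nat.cast_natAbs]
  push_cast
  ring
end

section
/- Let Ũ be a p×m real matrix with independent rows and Ṽ an (m−p)×m real matrix with independent rows such that Ũ Ṽᵀ = 0. Then there exists a nonzero real number λ, independent of I, such that for every subset I ⊆ {1,…,m} of size p, det(Ũ_I) = λ · ε(I ⋆ ∁I) · det(Ṽ_{∁I}), where ε(I ⋆ ∁I) = (−1)^ι with ι the number of inversions of the sequence listing I in increasing order followed by ∁I in increasing order. -/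
/-!
Stack `Ũ` over `Ṽ` into `N`, a square matrix once its rows `Fin p ⊕ Fin (m - p)` are identified
with `Fin m` in the standard way `e`. Reorder the columns of `N` as `I ⋆ ∁I`; multiplying on the
right by the block triangular matrix `[[1, Ṽ_Iᵀ], [0, Ṽ_{∁I}ᵀ]]` turns it into
`[[Ũ_I, ŨṼᵀ], [Ṽ_I, ṼṼᵀ]]`, whose upper right block vanishes. Hence
`det Ũ_I · det (ṼṼᵀ) = ε(I ⋆ ∁I) · det N_e · det Ṽ_{∁I}`, and `λ = det N_e / det (ṼṼᵀ)`.
It is nonzero because `(det N_e)² = det (ŨŨᵀ) · det (ṼṼᵀ)` and Gram matrices of independent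
rows are positive definite. The sign of the column reordering is read off its inversions, which
are exactly the pairs `(i, j) ∈ I × ∁I` with `j < i`.
-/

open Matrix Equiv Equiv.Perm Finset

theorem Equiv.Perm.sign_eq_neg_one_pow_card_inversions {n : ℕ} (σ : Perm (Fin n)) :
    sign σ = (-1) ^ #{x ∈ finPairsLT n | σ x.1 < σ x.2} := by
  have hsign : sign σ = signAux σ := by
    refine swap_induction_on σ (by simp) fun f x y hxy ih => ?_
    rw [signAux_mul, signAux_swap hxy, map_mul, sign_swap hxy, ih]
  rw [hsign, signAux, prod_ite, prod_const, prod_const_one, mul_one]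
  congr 2
  exact filter_congr fun x hx => (σ.injective.ne (mem_finPairsLT.1 hx).ne').le_iff_lt

theorem Equiv.Perm.sign_symm_trans_of_strictMono {p q n : ℕ} (e g : Fin p ⊕ Fin q ≃ Fin n)
    (hel : StrictMono (e ∘ Sum.inl)) (her : StrictMono (e ∘ Sum.inr))
    (helr : ∀ a b, e (Sum.inl a) < e (Sum.inr b))
    (hgl : StrictMono (g ∘ Sum.inl)) (hgr : StrictMono (g ∘ Sum.inr)) :
    sign (e.symm.trans g) =
      (-1) ^ #{x : Fin p × Fin q | g (Sum.inr x.2) < g (Sum.inl x.1)} := by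
  rw [sign_eq_neg_one_pow_card_inversions]
  congr 1
  symm
  refine card_bij (fun x _ => ⟨e (Sum.inr x.2), e (Sum.inl x.1)⟩) ?_ ?_ ?_
  · rintro ⟨a, b⟩ hab
    rw [mem_filter] at hab ⊢
    simpa [mem_finPairsLT, helr] using hab.2
  · rintro ⟨a, b⟩ - ⟨a', b'⟩ - h
    simp_all
  · rintro ⟨x, y⟩ hxy
    rw [mem_filter, mem_finPairsLT] at hxy
    obtain ⟨hyx, hσ⟩ := hxy
    obtain ⟨s, rfl⟩ := e.surjective x
    obtain ⟨t, rfl⟩ := e.surjective y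
    simp only [trans_apply, symm_apply_apply] at hσ
    rcases s with a | b <;> rcases t with a' | b'
    · exact absurd hσ (hgl (hel.lt_iff_lt.1 hyx)).not_gt
    · exact absurd hyx (helr a b').not_gt
    · exact ⟨(a', b), by simpa using hσ, rfl⟩
    · exact absurd hσ (hgr (her.lt_iff_lt.1 hyx)).not_gt

/-- The column order `I ⋆ ∁I`. -/
def Finset.finSumComplEquiv {p m : ℕ} (I : Finset (Fin m)) (hI : #I = p) :
    Fin p ⊕ Fin (m - p) ≃ Fin m :=
  (Equiv.sumCongr (I.orderIsoOfFin hI).toEquiv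
    (((Iᶜ).orderIsoOfFin (by simp [card_compl, hI])).toEquiv.trans
      (Equiv.subtypeEquivRight fun _ => mem_compl))).trans (Equiv.sumCompl (· ∈ I))

theorem Finset.sum_card_filter_compl_lt_eq_card {p m : ℕ} (I : Finset (Fin m)) (hI : #I = p) :
    ∑ i ∈ I, #{j ∈ Iᶜ | j < i} = #{x : Fin p × Fin (m - p) |
      I.finSumComplEquiv hI (Sum.inr x.2) < I.finSumComplEquiv hI (Sum.inl x.1)} := by
  have hI' : #Iᶜ = m - p := by simp [card_compl, hI]
  calc ∑ i ∈ I, #{j ∈ Iᶜ | j < i}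
      = ∑ i ∈ univ.map (I.orderEmbOfFin hI).toEmbedding,
          #{j ∈ univ.map (Iᶜ.orderEmbOfFin hI').toEmbedding | j < i} := by
        rw [map_orderEmbOfFin_univ, map_orderEmbOfFin_univ]
    _ = _ := by
        simp only [sum_map, filter_map, card_map, card_filter, Fintype.sum_prod_type]
        rfl

theorem Finset.sign_finSumComplEquiv {p m : ℕ} (h : p + (m - p) = m) (I : Finset (Fin m))
    (hI : #I = p) :
    sign ((finSumFinEquiv.trans (finCongr h)).symm.trans (I.finSumComplEquiv hI)) =
      (-1) ^ ∑ i ∈ I, #{j ∈ Iᶜ | j < i} := by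
  rw [sum_card_filter_compl_lt_eq_card]
  refine sign_symm_trans_of_strictMono _ _ ?_ ?_ ?_ ?_ ?_
  · intro a b hab; rw [Fin.lt_def] at hab ⊢; simpa using hab
  · intro a b hab; rw [Fin.lt_def] at hab ⊢; simpa using hab
  · intro a b; rw [Fin.lt_def]; simp; omega
  · exact (I.orderIsoOfFin hI).strictMono
  · exact ((Iᶜ).orderIsoOfFin (by simp [card_compl, hI])).strictMono

namespace Matrix

variable {R : Type*} [CommRing R]

theorem det_toBlocks₁₁_mul_det_toBlocks₂₂_mul_transpose {m n : Type*} [Fintype m] [Fintype n]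
    [DecidableEq m] [DecidableEq n] (M : Matrix (m ⊕ n) (m ⊕ n) R)
    (h : (M * Mᵀ).toBlocks₁₂ = 0) :
    M.toBlocks₁₁.det * (M * Mᵀ).toBlocks₂₂.det = M.det * M.toBlocks₂₂.det := by
  obtain ⟨A, B, C, D, rfl⟩ : ∃ A B C D, M = fromBlocks A B C D :=
    ⟨_, _, _, _, (fromBlocks_toBlocks M).symm⟩
  simp only [fromBlocks_transpose, fromBlocks_multiply, toBlocks_fromBlocks₁₂,
    toBlocks_fromBlocks₁₁, toBlocks_fromBlocks₂₂] at h ⊢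
  calc A.det * (C * Cᵀ + D * Dᵀ).det
      = (fromBlocks A (A * Cᵀ + B * Dᵀ) C (C * Cᵀ + D * Dᵀ)).det := by
        rw [h, det_fromBlocks_zero₁₂]
    _ = (fromBlocks A B C D * fromBlocks 1 Cᵀ 0 Dᵀ).det := by
        simp [fromBlocks_multiply]
    _ = (fromBlocks A B C D).det * D.det := by
        rw [det_mul, det_fromBlocks_zero₂₁, det_one, one_mul, det_transpose]

variable {ι κ : Type*} [Fintype ι] [Fintype κ]

theorem det_submatrix_equiv_eq_sign_mul [DecidableEq ι] [DecidableEq κ] (N : Matrix ι κ R)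
    (e f : ι ≃ κ) :
    (N.submatrix id f).det = sign (e.symm.trans f) * (N.submatrix id e).det := by
  have : N.submatrix id f = (N.submatrix id e).submatrix id (f.trans e.symm) := by
    ext; simp
  rw [this, det_permute', ← sign_trans_trans_symm (e.symm.trans f) e]
  congr 4
  ext; simp

theorem submatrix_id_equiv_mul_transpose (N : Matrix ι κ R) (e : ι ≃ κ) :
    N.submatrix id e * (N.submatrix id e)ᵀ = N * Nᵀ := by
  rw [transpose_submatrix, submatrix_mul_equiv, submatrix_id_id]

theorem fromRows_mul_transpose_self {m n k : Type*} [Fintype k] (U : Matrix m k R)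
    (V : Matrix n k R) :
    fromRows U V * (fromRows U V)ᵀ = fromBlocks (U * Uᵀ) (U * Vᵀ) (V * Uᵀ) (V * Vᵀ) := by
  rw [transpose_fromRows, fromRows_mul_fromCols]

theorem det_mul_transpose_self_ne_zero {m n : Type*} [Fintype m] [Fintype n] [DecidableEq m]
    {V : Matrix m n ℝ} (hV : LinearIndependent ℝ V.row) : (V * Vᵀ).det ≠ 0 := by
  have := (PosDef.mul_conjTranspose_self V (vecMul_injective_iff.2 hV)).isUnit
  rw [conjTranspose_eq_transpose_of_trivial, isUnit_iff_isUnit_det] at this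
  exact this.ne_zero

end Matrix

/-- if `Ũ` has `p` independent rows, `Ṽ` has `m−p` independent rows and
`Ũ Ṽᵀ = 0`, then there is a nonzero `λ`, independent of `I`, with
`det(Ũ_I) = λ · ε(I ⋆ ∁I) · det(Ṽ_{∁I})` for all `I` of size `p`.
Here `ε(I ⋆ ∁I) = (−1)^ι`, `ι` being the number of inversions of the concatenation of the
increasing enumerations of `I` and `∁I`, i.e. the number of pairs `(i, j)` with `i ∈ I`,
`j ∉ I`, `j < i`. -/
theorem duality_with_signs {p m : ℕ}
    (Ut : Matrix (Fin p) (Fin m) ℝ) (Vt : Matrix (Fin (m - p)) (Fin m) ℝ)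
    (hU : LinearIndependent ℝ (fun i => Ut i))
    (hV : LinearIndependent ℝ (fun i => Vt i))
    (hperp : Ut * Vtᵀ = 0) :
    ∃ lam : ℝ, lam ≠ 0 ∧ ∀ (I : Finset (Fin m)) (hI : I.card = p),
      (Ut.submatrix id (fun a => ((I.orderIsoOfFin hI a : ↥I) : Fin m))).det
        = lam * ((-1 : ℝ) ^ (∑ i ∈ I, ((Iᶜ).filter (fun j => j < i)).card)) *
          (Vt.submatrix id (fun a =>
            (((Iᶜ).orderIsoOfFin (by simp [Finset.card_compl, hI]) a : ↥(Iᶜ)) : Fin m))).det := by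
  have hpm : p ≤ m := by simpa using hU.fintype_card_le_finrank
  let e := finSumFinEquiv.trans (finCongr (Nat.add_sub_cancel' hpm))
  let N := fromRows Ut Vt
  have hgram : (N * Nᵀ).det = (Ut * Utᵀ).det * (Vt * Vtᵀ).det := by
    rw [fromRows_mul_transpose_self, hperp, det_fromBlocks_zero₁₂]
  have hVV := det_mul_transpose_self_ne_zero hV
  have hNe : (N.submatrix id e).det ≠ 0 := by
    have hsq : (N.submatrix id e).det * (N.submatrix id e).det = (N * Nᵀ).det := by
      rw [← submatrix_id_equiv_mul_transpose N e, det_mul, det_transpose]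
    have := mul_ne_zero (det_mul_transpose_self_ne_zero hU) hVV
    rw [← hgram, ← hsq] at this
    exact left_ne_zero_of_mul this
  refine ⟨(N.submatrix id e).det / (Vt * Vtᵀ).det, div_ne_zero hNe hVV, fun I hI => ?_⟩
  have key := det_toBlocks₁₁_mul_det_toBlocks₂₂_mul_transpose
    (N.submatrix id (I.finSumComplEquiv hI))
    (by rw [submatrix_id_equiv_mul_transpose, fromRows_mul_transpose_self, hperp,
      toBlocks_fromBlocks₁₂])
  rw [submatrix_id_equiv_mul_transpose, fromRows_mul_transpose_self, toBlocks_fromBlocks₂₂,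
    det_submatrix_equiv_eq_sign_mul N e, I.sign_finSumComplEquiv] at key
  rw [div_mul_eq_mul_div, div_mul_eq_mul_div, eq_div_iff hVV, mul_comm (N.submatrix id e).det]
  push_cast at key
  -- the diagonal blocks of the reordered `N` are `Ũ_I` and `Ṽ_{∁I}` definitionally
  exact key
end

section
/- Let Δ be a d-dimensional simplicial complex with n facets, y positive reals, v a basis of Z_d(Δ;ℝ), and a₁,…,a_l real d-chains. Write h_i = a_i − π(a_i) with π the (·,·)_y-orthogonal projection onto span(v). Then: (i) ‖v∧(a₁+⋯+a_l)‖²_y = Σ_i ‖v∧a_i‖²_y + 2‖v‖²_y Σ_{i<j} (h_i,h_j)_y, and (ii) ‖v∧a_i∧a_j‖²_y = ‖v‖²_y(‖h_i‖²_y‖h_j‖²_y − (h_i,h_j)²_y); in particular ‖v‖²_y (h_i,h_j)_y = ±√(‖v∧a_i‖²_y‖v∧a_j‖²_y − ‖v‖²_y‖v∧a_i∧a_j‖²_y). -/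
/-!
Write each appended vector as `x = h + s` with `s ∈ span v` and `h` orthogonal to `span v`.
Subtracting `s` is a unimodular row operation on the family, so the Gram determinant of
`v ⋆ (x₁, …, x_k)` equals that of `v ⋆ (h₁, …, h_k)`, whose Gram matrix is block diagonal:
it is `‖v‖²_y` times the Gram determinant of the `hᵢ`. The case `k = 1`, applied to `aᵢ` and to
`Σ aᵢ` (whose orthogonal part is `Σ hᵢ`), and the case `k = 2` give the three identities once
`(Σ hᵢ, Σ hᵢ)_y` is expanded.
-/

open Matrix

/-- The weighted inner product `(a,b)_y = Σ aᵢ bᵢ yᵢ` on `ℝⁿ`. -/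
def wip {n : ℕ} (y a b : Fin n → ℝ) : ℝ := ∑ i, a i * b i * y i

/-- The weighted Gram determinant `‖f‖²_y = det((fᵢ, fⱼ)_y)` of a family of vectors. -/
noncomputable def wgram {n m : ℕ} (y : Fin n → ℝ) (f : Fin m → Fin n → ℝ) : ℝ :=
  (Matrix.of fun a b => wip y (f a) (f b)).det

lemma snoc_eq_append_single {α : Type*} {m : ℕ} (w : Fin m → α) (x : α) :
    Fin.snoc w x = Fin.append w ![x] :=
  (Fin.append_right_eq_snoc w ![x]).symm

lemma snoc_snoc_eq_append_pair {α : Type*} {m : ℕ} (w : Fin m → α) (x z : α) :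
    Fin.snoc (Fin.snoc w x) z = Fin.append w ![x, z] := by
  have hpair : ![x, z] = Fin.snoc ![x] z := by ext i; fin_cases i <;> rfl
  rw [hpair, Fin.append_snoc, ← snoc_eq_append_single]

lemma sum_sum_eq_sum_add_two_mul_sum_lt {ι R : Type*} [Fintype ι] [LinearOrder ι] [Semiring R]
    (g : ι → ι → R) (hg : ∀ i j, g i j = g j i) :
    ∑ i, ∑ j, g i j = ∑ i, g i i + 2 * ∑ i, ∑ j ∈ Finset.univ.filter (fun j => i < j), g i j := by
  have hsplit : ∀ i, ∑ j, g i j = g i i + ∑ j ∈ Finset.univ.filter (fun j => i < j), g i j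
      + ∑ j ∈ Finset.univ.filter (fun j => j < i), g i j := fun i => by
    rw [show g i i = ∑ j, if i = j then g i j else 0 by simp]
    simp only [Finset.sum_filter, ← Finset.sum_add_distrib]
    refine Finset.sum_congr rfl fun j _ => ?_
    rcases lt_trichotomy i j with h | h | h
    · simp [h, h.not_gt, h.ne]
    · subst h; simp
    · simp [h, h.not_gt, h.ne']
  have hgt : ∑ i, ∑ j ∈ Finset.univ.filter (fun j => j < i), g i j
      = ∑ i, ∑ j ∈ Finset.univ.filter (fun j => i < j), g i j := by
    simp only [Finset.sum_filter]
    rw [Finset.sum_comm]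
    simp only [hg]
  rw [Finset.sum_congr rfl fun i _ => hsplit i, Finset.sum_add_distrib, Finset.sum_add_distrib,
    hgt, add_assoc, two_mul]

section WeightedGram

variable {n : ℕ} (y : Fin n → ℝ)

lemma wip_comm (a b : Fin n → ℝ) : wip y a b = wip y b a :=
  Finset.sum_congr rfl fun i _ => by ring

lemma wip_sum_left {ι : Type*} (s : Finset ι) (f : ι → Fin n → ℝ) (b : Fin n → ℝ) :
    wip y (∑ i ∈ s, f i) b = ∑ i ∈ s, wip y (f i) b := by
  simp only [wip, Finset.sum_apply, Finset.sum_mul]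
  exact Finset.sum_comm

lemma wip_sum_right {ι : Type*} (s : Finset ι) (a : Fin n → ℝ) (f : ι → Fin n → ℝ) :
    wip y a (∑ i ∈ s, f i) = ∑ i ∈ s, wip y a (f i) := by
  simp only [wip_comm y a, wip_sum_left]

def gramMatrix {ι : Type*} (f : ι → Fin n → ℝ) : Matrix ι ι ℝ :=
  of fun a b => wip y (f a) (f b)

lemma gramMatrix_eq_mul {ι : Type*} (f : ι → Fin n → ℝ) :
    gramMatrix y f = of f * diagonal y * (of f)ᵀ := by
  ext a b
  rw [mul_apply]
  simp only [gramMatrix, wip, mul_diagonal, of_apply, transpose_apply]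
  exact Finset.sum_congr rfl fun i _ => by ring

lemma gramMatrix_sumElim_of_orthogonal {ι κ : Type*} (w : ι → Fin n → ℝ) (u : κ → Fin n → ℝ)
    (horth : ∀ k i, wip y (u k) (w i) = 0) :
    gramMatrix y (Sum.elim w u) = fromBlocks (gramMatrix y w) 0 0 (gramMatrix y u) := by
  ext (i | k) (j | l)
  · rfl
  · exact (wip_comm y _ _).trans (horth l i)
  · exact horth k j
  · rfl

lemma det_gramMatrix_sumElim_add_span {ι κ : Type*} [Fintype ι] [DecidableEq ι] [Fintype κ]
    [DecidableEq κ] (w : ι → Fin n → ℝ) (u u' : κ → Fin n → ℝ)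
    (hmem : ∀ k, u' k - u k ∈ Submodule.span ℝ (Set.range w)) :
    (gramMatrix y (Sum.elim w u')).det = (gramMatrix y (Sum.elim w u)).det := by
  choose C hC using fun k => (Submodule.mem_span_range_iff_exists_fun ℝ).mp (hmem k)
  have hrows : ∀ u₀ : κ → Fin n → ℝ, of (Sum.elim w u₀) = fromRows (of w) (of u₀) := by
    intro u₀; ext (i | k) j <;> rfl
  have hu' : of u' = of C * of w + of u := by
    ext k j
    have hCkj := congrFun (hC k) j
    simp only [Finset.sum_apply, Pi.smul_apply, smul_eq_mul, Pi.sub_apply] at hCkj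
    simp [mul_apply, hCkj]
  set T : Matrix (ι ⊕ κ) (ι ⊕ κ) ℝ := fromBlocks 1 0 (of C) 1
  have hT : T.det = 1 := by simp [T]
  have hrow : of (Sum.elim w u') = T * of (Sum.elim w u) := by
    rw [hrows, hrows, fromBlocks_mul_fromRows, hu', Matrix.one_mul, Matrix.zero_mul, add_zero,
      Matrix.one_mul]
  have hgram : gramMatrix y (Sum.elim w u') = T * gramMatrix y (Sum.elim w u) * Tᵀ := by
    rw [gramMatrix_eq_mul, gramMatrix_eq_mul, hrow, transpose_mul]
    simp only [Matrix.mul_assoc]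
  rw [hgram, det_mul, det_mul, det_transpose, hT, one_mul, mul_one]

lemma wgram_append {m k : ℕ} (w : Fin m → Fin n → ℝ) (u : Fin k → Fin n → ℝ) :
    wgram y (Fin.append w u) = (gramMatrix y (Sum.elim w u)).det := by
  rw [← Fin.append_comp_sumElim]
  exact (det_submatrix_equiv_self finSumFinEquiv _).symm

lemma wgram_append_of_sub_mem_span_of_orthogonal {m k : ℕ} (w : Fin m → Fin n → ℝ)
    (u u' : Fin k → Fin n → ℝ) (hmem : ∀ j, u' j - u j ∈ Submodule.span ℝ (Set.range w))
    (horth : ∀ j i, wip y (u j) (w i) = 0) :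
    wgram y (Fin.append w u') = wgram y w * wgram y u := by
  rw [wgram_append, det_gramMatrix_sumElim_add_span y w u u' hmem,
    gramMatrix_sumElim_of_orthogonal y w u horth, det_fromBlocks_zero₂₁]
  rfl

lemma wgram_single (x : Fin n → ℝ) : wgram y ![x] = wip y x x :=
  det_fin_one _

lemma wgram_pair (x z : Fin n → ℝ) :
    wgram y ![x, z] = wip y x x * wip y z z - wip y x z ^ 2 := by
  simp [wgram, det_fin_two, sq, wip_comm y z x]

variable {m : ℕ} (v : Fin m → Fin n → ℝ)

lemma wgram_snoc_of_sub_mem_span_of_orthogonal (x h : Fin n → ℝ)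
    (hmem : x - h ∈ Submodule.span ℝ (Set.range v)) (horth : ∀ j, wip y h (v j) = 0) :
    wgram y (Fin.snoc v x) = wgram y v * wip y h h := by
  rw [snoc_eq_append_single, wgram_append_of_sub_mem_span_of_orthogonal y v ![h] ![x]
    (by simpa using hmem) (by simpa using horth), wgram_single]

lemma wgram_snoc_snoc_of_sub_mem_span_of_orthogonal (x z h k : Fin n → ℝ)
    (hmemx : x - h ∈ Submodule.span ℝ (Set.range v))
    (hmemz : z - k ∈ Submodule.span ℝ (Set.range v))
    (horthh : ∀ j, wip y h (v j) = 0) (horthk : ∀ j, wip y k (v j) = 0) :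
    wgram y (Fin.snoc (Fin.snoc v x) z)
      = wgram y v * (wip y h h * wip y k k - wip y h k ^ 2) := by
  rw [snoc_snoc_eq_append_pair, wgram_append_of_sub_mem_span_of_orthogonal y v ![h, k] ![x, z]
    (by simp [Fin.forall_fin_two, hmemx, hmemz]) (by simp [Fin.forall_fin_two, horthh, horthk]),
    wgram_pair]

end WeightedGram

theorem gram_expansion_identities_general {n m l : ℕ}
    (y : Fin n → ℝ)
    (v : Fin m → Fin n → ℝ)
    (a h : Fin l → Fin n → ℝ)
    (hmem : ∀ i, a i - h i ∈ Submodule.span ℝ (Set.range v))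
    (horth : ∀ i j, wip y (h i) (v j) = 0) :
    (wgram y (Fin.snoc v (∑ i, a i))
        = (∑ i, wgram y (Fin.snoc v (a i)))
          + 2 * wgram y v *
            ∑ i, ∑ j ∈ Finset.univ.filter (fun j => i < j), wip y (h i) (h j)) ∧
    (∀ i j, wgram y (Fin.snoc (Fin.snoc v (a i)) (a j))
        = wgram y v *
            (wip y (h i) (h i) * wip y (h j) (h j) - wip y (h i) (h j) ^ 2)) ∧
    (∀ i j, (wgram y v * wip y (h i) (h j)) ^ 2
        = wgram y (Fin.snoc v (a i)) * wgram y (Fin.snoc v (a j))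
          - wgram y v * wgram y (Fin.snoc (Fin.snoc v (a i)) (a j))) := by
  have hsnoc i := wgram_snoc_of_sub_mem_span_of_orthogonal y v (a i) (h i) (hmem i) (horth i)
  have hsnoc_snoc i j := wgram_snoc_snoc_of_sub_mem_span_of_orthogonal y v (a i) (a j) (h i) (h j)
    (hmem i) (hmem j) (horth i) (horth j)
  have hsum : wgram y (Fin.snoc v (∑ i, a i)) = wgram y v * wip y (∑ i, h i) (∑ i, h i) := by
    refine wgram_snoc_of_sub_mem_span_of_orthogonal y v _ _ ?_ fun j => ?_
    · rw [← Finset.sum_sub_distrib]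
      exact Submodule.sum_mem _ fun i _ => hmem i
    · simp [wip_sum_left, horth]
  refine ⟨?_, hsnoc_snoc, fun i j => ?_⟩
  · rw [hsum, wip_sum_left]
    simp only [hsnoc, wip_sum_right]
    rw [sum_sum_eq_sum_add_two_mul_sum_lt _ fun i j => wip_comm y (h i) (h j), ← Finset.mul_sum]
    ring
  · rw [hsnoc_snoc, hsnoc, hsnoc]
    ring

/-- with `v` a basis of the cycle space, `hᵢ = aᵢ − π(aᵢ)` the orthogonal
components of the `aᵢ` with respect to `span v` and `(·,·)_y`:
(i) `‖v∧(a₁+⋯+a_l)‖²_y = Σᵢ ‖v∧aᵢ‖²_y + 2‖v‖²_y Σ_{i<j} (hᵢ,hⱼ)_y`;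
(ii) `‖v∧aᵢ∧aⱼ‖²_y = ‖v‖²_y (‖hᵢ‖²_y ‖hⱼ‖²_y − (hᵢ,hⱼ)²_y)`;
(iii) `(‖v‖²_y (hᵢ,hⱼ)_y)² = ‖v∧aᵢ‖²_y ‖v∧aⱼ‖²_y − ‖v‖²_y ‖v∧aᵢ∧aⱼ‖²_y`
(the "±√" form of the cross term). -/
theorem gram_expansion_identities {n m l : ℕ}
    (y : Fin n → ℝ) (hy : ∀ i, 0 < y i)
    (v : Fin m → Fin n → ℝ) (hv : LinearIndependent ℝ v)
    (a h : Fin l → Fin n → ℝ)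
    (hmem : ∀ i, a i - h i ∈ Submodule.span ℝ (Set.range v))
    (horth : ∀ i j, wip y (h i) (v j) = 0) :
    (wgram y (Fin.snoc v (∑ i, a i))
        = (∑ i, wgram y (Fin.snoc v (a i)))
          + 2 * wgram y v *
            ∑ i, ∑ j ∈ Finset.univ.filter (fun j => i < j), wip y (h i) (h j)) ∧
    (∀ i j, wgram y (Fin.snoc (Fin.snoc v (a i)) (a j))
        = wgram y v *
            (wip y (h i) (h i) * wip y (h j) (h j) - wip y (h i) (h j) ^ 2)) ∧
    (∀ i j, (wgram y v * wip y (h i) (h j)) ^ 2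
        = wgram y (Fin.snoc v (a i)) * wgram y (Fin.snoc v (a j))
          - wgram y v * wgram y (Fin.snoc (Fin.snoc v (a i)) (a j))) :=
  gram_expansion_identities_general y v a h hmem horth
end

section
/- (Invariance on the exchange graph) Let M = (E, I) be a matroid and G its exchange graph on vertex set I × I, where (I₁,I₂) and (I₁',I₂') are adjacent iff there is i ∈ E with {I₁' = I₁+i, I₂' = I₂−i} or {I₁' = I₁−i, I₂' = I₂+i}. Then along any connected component of G, the multiset I ⊎ J and the maximal codependent pair MCP(I,J) are invariant. -/
/-- Adjacency in the exchange graph of a matroid: both vertices are pairs of independent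
sets, and one is obtained from the other by moving a single element between the
coordinates. -/
def exchAdj {α : Type*} (M : Matroid α) (v w : Set α × Set α) : Prop :=
  M.Indep v.1 ∧ M.Indep v.2 ∧ M.Indep w.1 ∧ M.Indep w.2 ∧
    ∃ i, (i ∉ v.1 ∧ i ∈ v.2 ∧ w.1 = insert i v.1 ∧ w.2 = v.2 \ {i}) ∨
         (i ∈ v.1 ∧ i ∉ v.2 ∧ w.1 = v.1 \ {i} ∧ w.2 = insert i v.2)

/-- `(U,V)` is a codependent pair of `(I,J)`: `U ⊆ I`, `V ⊆ J` and `cl(U) = cl(V)`. -/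
def CodepPair {α : Type*} (M : Matroid α) (I J U V : Set α) : Prop :=
  U ⊆ I ∧ V ⊆ J ∧ M.closure U = M.closure V

/-- `(U,V)` is the maximal codependent pair `MCP(I,J)`. -/
def IsMCP {α : Type*} (M : Matroid α) (I J U V : Set α) : Prop :=
  CodepPair M I J U V ∧ ∀ U' V', CodepPair M I J U' V' → U' ⊆ U ∧ V' ⊆ V

/-!
Moving an element `i` from `J` to `I` is only allowed when `I + i` is independent, i.e.
`i ∉ cl(I)`. Then `i` lies in no `V` of a codependent pair `(U, V)` of `(I, J)`, since
`cl(V) = cl(U) ⊆ cl(I)`; symmetrically `i` lies in no `U` of a codependent pair of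
`(I + i, J - i)`, since `J` is independent and so `i ∉ cl(J - i)`. Hence both pairs of sets
have the same codependent pairs, and in particular the same maximal one. The sets
`I ∪ J` and `I ∩ J`, which determine `I ⊎ J`, are clearly unchanged by a move.
-/

section

variable {α : Type*} {M : Matroid α} {I J : Set α} {i : α}

lemma codepPair_comm (I J : Set α) :
    CodepPair M J I = flip (CodepPair M I J) := by
  ext V U
  exact ⟨fun ⟨hV, hU, hcl⟩ ↦ ⟨hU, hV, hcl.symm⟩, fun ⟨hU, hV, hcl⟩ ↦ ⟨hV, hU, hcl.symm⟩⟩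

lemma codepPair_insert_sdiff (hI : M.Indep (insert i I)) (hiI : i ∉ I) (hJ : M.Indep J)
    (hiJ : i ∈ J) : CodepPair M (insert i I) (J \ {i}) = CodepPair M I J := by
  have hi_cl : i ∉ M.closure I :=
    ((hI.subset (Set.subset_insert i I)).insert_indep_iff_of_notMem hiI |>.1 hI).2
  ext U V
  constructor
  · rintro ⟨hU, hV, hcl⟩
    have hiU : i ∉ U := fun hiU ↦ hJ.notMem_closure_sdiff_of_mem hiJ <|
      M.closure_subset_closure hV (hcl ▸ M.mem_closure_of_mem' hiU (hI.subset_ground (.inl rfl)))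
    exact ⟨fun x hx ↦ (hU hx).resolve_left (by rintro rfl; exact hiU hx),
      hV.trans Set.sdiff_subset, hcl⟩
  · rintro ⟨hU, hV, hcl⟩
    have hiV : i ∉ V := fun hiV ↦ hi_cl <|
      M.closure_subset_closure hU (hcl ▸ M.mem_closure_of_mem' hiV (hJ.subset_ground hiJ))
    exact ⟨hU.trans (Set.subset_insert i I), fun x hx ↦ ⟨hV hx, by rintro rfl; exact hiV hx⟩,
      hcl⟩

def exchangeInvariants (M : Matroid α) (v : Set α × Set α) :
    Set α × Set α × (Set α → Set α → Prop) :=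
  (v.1 ∪ v.2, v.1 ∩ v.2, CodepPair M v.1 v.2)

lemma exchangeInvariants_swap (v : Set α × Set α) :
    exchangeInvariants M v.swap = Prod.map id (Prod.map id flip) (exchangeInvariants M v) := by
  simp only [exchangeInvariants, Prod.fst_swap, Prod.snd_swap, Prod.map_apply, id,
    Set.union_comm v.2, Set.inter_comm v.2, codepPair_comm v.1]

lemma exchangeInvariants_insert_sdiff (hI : M.Indep (insert i I)) (hiI : i ∉ I)
    (hJ : M.Indep J) (hiJ : i ∈ J) :
    exchangeInvariants M (insert i I, J \ {i}) = exchangeInvariants M (I, J) := by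
  simp only [exchangeInvariants, codepPair_insert_sdiff hI hiI hJ hiJ, Prod.mk.injEq, and_true]
  constructor
  · rw [Set.insert_union, ← Set.union_insert, Set.insert_sdiff_singleton, Set.insert_eq_of_mem hiJ]
  · rw [Set.insert_inter_of_notMem (fun h ↦ h.2 rfl), ← Set.inter_sdiff_assoc,
      Set.sdiff_singleton_eq_self (fun h ↦ hiI h.1)]

lemma exchAdj.exchangeInvariants_eq {v w : Set α × Set α} (h : exchAdj M v w) :
    exchangeInvariants M v = exchangeInvariants M w := by
  obtain ⟨I, J⟩ := v
  obtain ⟨I', J'⟩ := w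
  obtain ⟨hI, hJ, hI', hJ', i, ⟨hiI, hiJ, rfl, rfl⟩ | ⟨hiI, hiJ, rfl, rfl⟩⟩ := h
  · exact (exchangeInvariants_insert_sdiff hI' hiI hJ hiJ).symm
  · have hswap : exchangeInvariants M (I, J).swap =
        exchangeInvariants M (I \ {i}, insert i J).swap :=
      (exchangeInvariants_insert_sdiff hJ' hiJ hI hiI).symm
    rw [exchangeInvariants_swap, exchangeInvariants_swap] at hswap
    have hflip : Function.Injective (flip : (Set α → Set α → Prop) → _) :=
      fun _ _ h ↦ congrArg flip h
    exact Function.injective_id.prodMap (Function.injective_id.prodMap hflip) hswap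

end

/-- along any connected component of the exchange graph, the multiset
`I ⊎ J` (equivalently, the pair `(I ∪ J, I ∩ J)`, multiplicities being at most two) and
the maximal codependent pair `MCP(I,J)` are invariant. -/
theorem exchange_graph_invariants {α : Type*} (M : Matroid α)
    (v w : Set α × Set α)
    (hreach : Relation.ReflTransGen (exchAdj M) v w) :
    v.1 ∪ v.2 = w.1 ∪ w.2 ∧ v.1 ∩ v.2 = w.1 ∩ w.2 ∧
      ∀ U V, IsMCP M v.1 v.2 U V ↔ IsMCP M w.1 w.2 U V := by
  have h : exchangeInvariants M v = exchangeInvariants M w := by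
    simpa only [Relation.reflTransGen_eq_self] using
      Relation.ReflTransGen.lift (p := Eq) (exchangeInvariants M)
        (fun _ _ ↦ exchAdj.exchangeInvariants_eq) v w hreach
  simp only [exchangeInvariants, Prod.mk.injEq] at h
  obtain ⟨hunion, hinter, hcodep⟩ := h
  exact ⟨hunion, hinter, fun U V ↦ by simp only [IsMCP, hcodep]⟩
end

section
/- (Isolated vertices of the exchange graph) Let M = (E,I) be a matroid with exchange graph G. A vertex (I,J) ∈ I × I is isolated in G if and only if cl(I) = cl(J). Moreover, in the bipartite subgraph G_{p,q} induced on (I_p × I_q) ⊔ (I_{p−1} × I_{q+1}) (with 1 ≤ p ≤ r, 0 ≤ q ≤ r−1), a vertex (I,J) ∈ I_p × I_q is isolated iff I ⊆ cl(J); in particular, if p = q+1 then G_{p,q} has no isolated vertex. -/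
/-! An edge at `(I, J)` moves one element `i` from one side to the other, and moving `i` from `I`
into `J` keeps `J + i` independent exactly when `i ∉ cl(J)`. So `(I, J)` has a neighbour iff
`I ⊄ cl(J)` or `J ⊄ cl(I)`, and `cl(I) = cl(J)` is the conjunction of the two inclusions. In `G_{p,q}`
cardinalities only allow moves from `I` into `J`, and for `|I| = |J| + 1` augmentation supplies one. -/

open Set

/-- The vertex `v` belongs to the part `I_p × I_q` of the exchange graph. -/
def inPart {α : Type*} (M : Matroid α) (p q : ℕ) (v : Set α × Set α) : Prop :=
  M.Indep v.1 ∧ M.Indep v.2 ∧ v.1.ncard = p ∧ v.2.ncard = q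

namespace Matroid

variable {α : Type*} {M : Matroid α} {I J : Set α}

lemma Indep.exists_insert_indep_iff_not_subset_closure (hJ : M.Indep J) (hI : I ⊆ M.E) :
    (∃ i ∈ I \ J, M.Indep (insert i J)) ↔ ¬ I ⊆ M.closure J := by
  rw [not_subset]
  refine exists_congr fun i ↦ ⟨fun ⟨⟨hiI, hiJ⟩, hins⟩ ↦ ⟨hiI, ?_⟩, fun ⟨hiI, hicl⟩ ↦ ?_⟩
  · exact (hJ.notMem_closure_iff (hI hiI)).2 ⟨hins, hiJ⟩
  · obtain ⟨hins, hiJ⟩ := (hJ.notMem_closure_iff (hI hiI)).1 hicl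
    exact ⟨⟨hiI, hiJ⟩, hins⟩

lemma Indep.not_subset_closure_of_encard_lt (hI : M.Indep I) (hJ : M.Indep J)
    (hlt : J.encard < I.encard) : ¬ I ⊆ M.closure J :=
  (hJ.exists_insert_indep_iff_not_subset_closure hI.subset_ground).1 (hJ.augment hI hlt)

end Matroid

open Matroid

section ExchangeGraph

variable {α : Type*} {M : Matroid α} {I J : Set α}

lemma exchAdj_iff {w : Set α × Set α} : exchAdj M (I, J) w ↔ M.Indep I ∧ M.Indep J ∧
    ((∃ i ∈ J \ I, M.Indep (insert i I) ∧ w = (insert i I, J \ {i})) ∨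
      (∃ i ∈ I \ J, M.Indep (insert i J) ∧ w = (I \ {i}, insert i J))) := by
  obtain ⟨w₁, w₂⟩ := w
  constructor
  · rintro ⟨hI, hJ, hw₁, hw₂, i, ⟨hiI, hiJ, rfl, rfl⟩ | ⟨hiI, hiJ, rfl, rfl⟩⟩
    · exact ⟨hI, hJ, Or.inl ⟨i, ⟨hiJ, hiI⟩, hw₁, rfl⟩⟩
    · exact ⟨hI, hJ, Or.inr ⟨i, ⟨hiI, hiJ⟩, hw₂, rfl⟩⟩
  · rintro ⟨hI, hJ, ⟨i, ⟨hiJ, hiI⟩, hins, hw⟩ | ⟨i, ⟨hiI, hiJ⟩, hins, hw⟩⟩ <;>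
      obtain ⟨rfl, rfl⟩ := Prod.ext_iff.1 hw
    · exact ⟨hI, hJ, hins, hJ.subset sdiff_subset, i, Or.inl ⟨hiI, hiJ, rfl, rfl⟩⟩
    · exact ⟨hI, hJ, hI.subset sdiff_subset, hins, i, Or.inr ⟨hiI, hiJ, rfl, rfl⟩⟩

lemma exists_exchAdj_iff (hI : M.Indep I) (hJ : M.Indep J) :
    (∃ w, exchAdj M (I, J) w) ↔ ¬ J ⊆ M.closure I ∨ ¬ I ⊆ M.closure J := by
  rw [← hI.exists_insert_indep_iff_not_subset_closure hJ.subset_ground,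
    ← hJ.exists_insert_indep_iff_not_subset_closure hI.subset_ground]
  simp only [exchAdj_iff, hI, hJ, true_and]
  constructor
  · rintro ⟨w, ⟨i, hi, hins, -⟩ | ⟨i, hi, hins, -⟩⟩
    exacts [Or.inl ⟨i, hi, hins⟩, Or.inr ⟨i, hi, hins⟩]
  · rintro (⟨i, hi, hins⟩ | ⟨i, hi, hins⟩)
    exacts [⟨_, Or.inl ⟨i, hi, hins, rfl⟩⟩, ⟨_, Or.inr ⟨i, hi, hins, rfl⟩⟩]

lemma exists_inPart_exchAdj_iff [M.RankFinite] (hI : M.Indep I) (hJ : M.Indep J) (a b : ℕ) :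
    (∃ w, inPart M a b w ∧ exchAdj M (I, J) w) ↔
      (a = I.ncard + 1 ∧ b + 1 = J.ncard ∧ ¬ J ⊆ M.closure I) ∨
      (a + 1 = I.ncard ∧ b = J.ncard + 1 ∧ ¬ I ⊆ M.closure J) := by
  rw [← hI.exists_insert_indep_iff_not_subset_closure hJ.subset_ground,
    ← hJ.exists_insert_indep_iff_not_subset_closure hI.subset_ground]
  constructor
  · rintro ⟨w, ⟨-, -, rfl, rfl⟩, hadj⟩
    obtain ⟨-, -, ⟨i, hi, hins, rfl⟩ | ⟨i, hi, hins, rfl⟩⟩ := exchAdj_iff.1 hadj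
    · exact Or.inl ⟨ncard_insert_of_notMem hi.2 hI.finite,
        ncard_sdiff_singleton_add_one hi.1 hJ.finite, i, hi, hins⟩
    · exact Or.inr ⟨ncard_sdiff_singleton_add_one hi.1 hI.finite,
        ncard_insert_of_notMem hi.2 hJ.finite, i, hi, hins⟩
  · rintro (⟨rfl, hb, i, hi, hins⟩ | ⟨ha, rfl, i, hi, hins⟩)
    · refine ⟨_, ⟨hins, hJ.subset sdiff_subset, ncard_insert_of_notMem hi.2 hI.finite, ?_⟩,
        exchAdj_iff.2 ⟨hI, hJ, Or.inl ⟨i, hi, hins, rfl⟩⟩⟩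
      have := ncard_sdiff_singleton_add_one hi.1 hJ.finite
      dsimp only
      omega
    · refine ⟨_, ⟨hI.subset sdiff_subset, hins, ?_, ncard_insert_of_notMem hi.2 hJ.finite⟩,
        exchAdj_iff.2 ⟨hI, hJ, Or.inr ⟨i, hi, hins, rfl⟩⟩⟩
      have := ncard_sdiff_singleton_add_one hi.1 hI.finite
      dsimp only
      omega

lemma exists_exchAdj_moving_right_iff [M.RankFinite] (hI : M.Indep I) (hJ : M.Indep J) :
    (∃ w, inPart M (I.ncard - 1) (J.ncard + 1) w ∧ exchAdj M (I, J) w) ↔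
      ¬ I ⊆ M.closure J := by
  rw [exists_inPart_exchAdj_iff hI hJ]
  refine ⟨?_, fun h ↦ Or.inr ⟨?_, rfl, h⟩⟩
  · rintro (⟨h, -⟩ | ⟨-, -, h⟩)
    exacts [by omega, h]
  · -- `I.ncard - 1` truncates at `I = ∅`, a case excluded by `h`.
    by_contra hI0
    exact h (by simp [show I = ∅ from (ncard_eq_zero hI.finite).1 (by omega)])

lemma exists_exchAdj_moving_left_iff [M.RankFinite] (hI : M.Indep I) (hJ : M.Indep J) :
    (∃ w, inPart M (I.ncard + 1) (J.ncard - 1) w ∧ exchAdj M (I, J) w) ↔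
      ¬ J ⊆ M.closure I := by
  rw [exists_inPart_exchAdj_iff hI hJ]
  refine ⟨?_, fun h ↦ Or.inl ⟨rfl, ?_, h⟩⟩
  · rintro (⟨-, -, h⟩ | ⟨h, -⟩)
    exacts [h, by omega]
  · by_contra hJ0
    exact h (by simp [show J = ∅ from (ncard_eq_zero hJ.finite).1 (by omega)])

end ExchangeGraph

/-- isolated vertices of the exchange graph:
(1) a vertex `(I,J)` is isolated in `G` iff `cl(I) = cl(J)`;
(2) a vertex `(I,J) ∈ I_p × I_q` is isolated in the bipartite subgraph `G_{p,q}`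
(on `(I_p × I_q) ⊔ (I_{p−1} × I_{q+1})`) iff `I ⊆ cl(J)`, and a vertex
`(J,I) ∈ I_{p−1} × I_{q+1}` is isolated in `G_{p,q}` iff `I ⊆ cl(J)`;
(3) if `p = q + 1` then `G_{p,q}` has no isolated vertex. -/
theorem exchange_graph_isolated_vertices {α : Type*} (M : Matroid α) [M.Finite]
    (p q : ℕ) (hp : 1 ≤ p) :
    (∀ I J : Set α, M.Indep I → M.Indep J →
      ((¬ ∃ w : Set α × Set α, exchAdj M (I, J) w) ↔ M.closure I = M.closure J)) ∧
    (∀ I J : Set α, M.Indep I → M.Indep J → I.ncard = p → J.ncard = q →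
      ((¬ ∃ w : Set α × Set α, inPart M (p - 1) (q + 1) w ∧ exchAdj M (I, J) w) ↔
        I ⊆ M.closure J)) ∧
    (∀ J I : Set α, M.Indep J → M.Indep I → J.ncard = p - 1 → I.ncard = q + 1 →
      ((¬ ∃ w : Set α × Set α, inPart M p q w ∧ exchAdj M (J, I) w) ↔
        I ⊆ M.closure J)) ∧
    (p = q + 1 → ∀ I J : Set α, M.Indep I → M.Indep J → I.ncard = p → J.ncard = q →
      ∃ w : Set α × Set α, inPart M (p - 1) (q + 1) w ∧ exchAdj M (I, J) w) := by
  refine ⟨fun I J hI hJ ↦ ?_, ?_, fun J I hJ hI hJp hIq ↦ ?_, fun hpq I J hI hJ hIp hJq ↦ ?_⟩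
  · rw [exists_exchAdj_iff hI hJ, subset_antisymm_iff,
      closure_subset_closure_iff_subset_closure, closure_subset_closure_iff_subset_closure]
    tauto
  · rintro I J hI hJ rfl rfl
    rw [exists_exchAdj_moving_right_iff hI hJ, not_not]
  · obtain ⟨rfl, rfl⟩ : p = J.ncard + 1 ∧ q = I.ncard - 1 := by omega
    rw [exists_exchAdj_moving_left_iff hJ hI, not_not]
  · subst hIp hJq
    refine (exists_exchAdj_moving_right_iff hI hJ).2 (hI.not_subset_closure_of_encard_lt hJ ?_)
    rw [← hI.finite.cast_ncard_eq, ← hJ.finite.cast_ncard_eq, hpq]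
    exact_mod_cast J.ncard.lt_succ_self
end

section
/- (Stability of Symanzik rational fractions, order 2) Let v be a linearly independent family of n vectors in ℝᵖ, a ∈ ℝᵖ independent from v, and w = v ⋆ (a). Let y(t) = (y₁(t),…,y_n(t)) be positive functions of a parameter t, Y(t) = diag(y(t)), and Z(t) a bounded family of symmetric n×n matrices such that Vᵀ(Y(t)+Z(t))V is positive definite whenever the y_i(t) are large. Then there exist constants c, C > 0 such that whenever y₁(t),…,y_n(t) ≥ C, | det(Wᵀ Y(t) W)/det(Vᵀ Y(t) V) − det(Wᵀ(Y(t)+Z(t))W)/det(Vᵀ(Y(t)+Z(t))V) | ≤ c. -/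
/-!
By the Schur complement, `det (Wᵀ A W) / det (Vᵀ A V)` is the quadratic form `r ⬝ᵥ A *ᵥ r` of
the residual `r` of the `A`-weighted least-squares approximation of `a` by the columns of `V`.

For a positive diagonal weight `A = Y`, Cauchy–Binet and Cramer's rule show that the
least-squares coefficients are bounded independently of `Y`, hence so is `r`.
Replacing `Y` by `Y + Z`, the difference of the two forms is `-(r' ⬝ᵥ Z *ᵥ r)`, where `r'` is the
new residual. The difference `r - r'` lies in the column span of `V`, where the form of `Y + Z`
is coercive once the weights are large; this bounds `r'` by `r`, and the theorem follows.
-/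

open Matrix

/-- Append the column `a` to the matrix `V` : this is the matrix `W = V ⋆ (a)`. -/
def snocCol {n p : ℕ} (V : Matrix (Fin n) (Fin p) ℝ) (a : Fin n → ℝ) :
    Matrix (Fin n) (Fin (p + 1)) ℝ :=
  Matrix.of fun i => Fin.snoc (V i) (a i)

section CauchyBinet

variable {R : Type*} [CommRing R] {ι m : Type*} [Fintype ι] [DecidableEq ι] [Fintype m]

theorem Matrix.det_mul_eq_sum_prod_mul_det_submatrix (A : Matrix ι m R) (B : Matrix m ι R) :
    (A * B).det = ∑ r : ι → m, (∏ j, A j (r j)) * (B.submatrix r id).det := by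
  have hrows : A * B = Matrix.of fun j => ∑ i, A j i • B i := by
    ext j l
    simp [Matrix.mul_apply, Finset.sum_apply]
  rw [hrows]
  change (detRowAlternating : (ι → R) [⋀^ι]→ₗ[R] R).toMultilinearMap
    (fun j => ∑ i, A j i • B i) = _
  rw [MultilinearMap.map_sum]
  refine Finset.sum_congr rfl fun r _ => ?_
  rw [MultilinearMap.map_smul_univ]
  rfl

/-- Cauchy–Binet, summed over all maps `ι → m`: non-injective maps contribute `0`, and each
`card ι`-element subset of `m` is counted `(card ι)!` times. -/
theorem Matrix.factorial_card_mul_det_mul (A : Matrix ι m R) (B : Matrix m ι R) :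
    ((Fintype.card ι).factorial : R) * (A * B).det
      = ∑ r : ι → m, (A.submatrix id r).det * (B.submatrix r id).det := by
  have hperm : ∀ τ : Equiv.Perm ι, (A * B).det
      = ∑ r : ι → m, (Equiv.Perm.sign τ : R) * (∏ j, A (τ j) (r j)) * (B.submatrix r id).det := by
    intro τ
    rw [Matrix.det_mul_eq_sum_prod_mul_det_submatrix]
    refine Fintype.sum_equiv (Equiv.arrowCongr τ.symm (Equiv.refl m)) _ _ fun r => ?_
    have hsign : (Equiv.Perm.sign τ : R) * Equiv.Perm.sign τ = 1 := by
      rw [← Int.cast_mul, ← Units.val_mul, Int.units_mul_self, Units.val_one, Int.cast_one]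
    have hr : Equiv.arrowCongr τ.symm (Equiv.refl m) r = r ∘ τ := rfl
    simp only [hr, Function.comp_apply]
    have hB : B.submatrix (r ∘ τ) id = (B.submatrix r id).submatrix τ id := rfl
    rw [hB, Matrix.det_permute, Equiv.prod_comp τ fun j => A j (r j)]
    linear_combination (-(∏ j, A j (r j)) * (B.submatrix r id).det) * hsign
  calc ((Fintype.card ι).factorial : R) * (A * B).det
      = ∑ τ : Equiv.Perm ι, (A * B).det := by
        simp [Finset.card_univ, Fintype.card_perm]
    _ = ∑ r : ι → m, (∑ τ : Equiv.Perm ι, (Equiv.Perm.sign τ : R) * ∏ j, A (τ j) (r j))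
          * (B.submatrix r id).det := by
        rw [Finset.sum_congr rfl fun τ _ => hperm τ, Finset.sum_comm]
        simp only [Finset.sum_mul]
    _ = ∑ r : ι → m, (A.submatrix id r).det * (B.submatrix r id).det := by
        simp only [Matrix.det_apply', Matrix.submatrix_apply, id]

end CauchyBinet

section LeastSquares

variable {R : Type*} [CommRing R] {m ι : Type*} [Fintype m] [Fintype ι] [DecidableEq ι]

/-- When `Vᵀ A V` is invertible, `V *ᵥ lstsqCoeff V A a` is the `A`-orthogonal projection of `a`
onto the column span of `V`. -/
noncomputable def lstsqCoeff (V : Matrix m ι R) (A : Matrix m m R) (a : m → R) : ι → R :=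
  (Vᵀ * A * V)⁻¹ *ᵥ (Vᵀ *ᵥ (A *ᵥ a))

noncomputable def lstsqResidual (V : Matrix m ι R) (A : Matrix m m R) (a : m → R) : m → R :=
  a - V *ᵥ lstsqCoeff V A a

variable {V : Matrix m ι R} {A : Matrix m m R}

theorem transpose_mulVec_mulVec_lstsqResidual (hV : IsUnit (Vᵀ * A * V).det) (a : m → R) :
    Vᵀ *ᵥ (A *ᵥ lstsqResidual V A a) = 0 := by
  rw [lstsqResidual, lstsqCoeff, mulVec_sub, mulVec_sub, mulVec_mulVec, mulVec_mulVec,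
    mulVec_mulVec, mulVec_mulVec, mul_nonsing_inv _ hV, one_mulVec, sub_self]

theorem dotProduct_mulVec_lstsqResidual_eq_zero (hV : IsUnit (Vᵀ * A * V).det) (a : m → R)
    (d : ι → R) : (V *ᵥ d) ⬝ᵥ (A *ᵥ lstsqResidual V A a) = 0 := by
  rw [dotProduct_comm, dotProduct_mulVec, ← mulVec_transpose, dotProduct_comm,
    transpose_mulVec_mulVec_lstsqResidual hV, dotProduct_zero]

theorem lstsqResidual_dotProduct_mulVec (hV : IsUnit (Vᵀ * A * V).det) (a : m → R) :
    lstsqResidual V A a ⬝ᵥ (A *ᵥ lstsqResidual V A a)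
      = a ⬝ᵥ (A *ᵥ a) - a ⬝ᵥ (A *ᵥ (V *ᵥ lstsqCoeff V A a)) := by
  calc lstsqResidual V A a ⬝ᵥ (A *ᵥ lstsqResidual V A a)
      = (a - V *ᵥ lstsqCoeff V A a) ⬝ᵥ (A *ᵥ lstsqResidual V A a) := rfl
    _ = a ⬝ᵥ (A *ᵥ lstsqResidual V A a) := by
      rw [sub_dotProduct, dotProduct_mulVec_lstsqResidual_eq_zero hV, sub_zero]
    _ = _ := by rw [lstsqResidual, mulVec_sub, dotProduct_sub]

end LeastSquares

theorem det_snocCol_gram {n p : ℕ} (V : Matrix (Fin n) (Fin p) ℝ) (a : Fin n → ℝ)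
    (A : Matrix (Fin n) (Fin n) ℝ) (hV : IsUnit (Vᵀ * A * V).det) :
    ((snocCol V a)ᵀ * A * snocCol V a).det
      = (Vᵀ * A * V).det * (lstsqResidual V A a ⬝ᵥ (A *ᵥ lstsqResidual V A a)) := by
  set c := replicateCol (Fin 1) a
  have hW : snocCol V a = (fromCols V c).submatrix id finSumFinEquiv.symm := by
    ext i j
    refine Fin.lastCases ?_ (fun k => ?_) j <;> simp [snocCol, c]
  have hquad : ∀ N : Matrix (Fin n) (Fin n) ℝ, (cᵀ * N * c) 0 0 = a ⬝ᵥ (N *ᵥ a) := by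
    intro N
    rw [transpose_replicateCol, ← replicateRow_vecMul, replicateRow_mul_replicateCol_apply,
      dotProduct_mulVec]
  let _ := invertibleOfIsUnitDet _ hV
  have hblocks : (snocCol V a)ᵀ * A * snocCol V a
      = (fromBlocks (Vᵀ * A * V) (Vᵀ * A * c) (cᵀ * A * V) (cᵀ * A * c)).submatrix
          finSumFinEquiv.symm finSumFinEquiv.symm := by
    rw [hW, transpose_submatrix]
    change ((fromCols V c)ᵀ * A * fromCols V c).submatrix _ _ = _
    rw [transpose_fromCols, fromRows_mul, fromRows_mul_fromCols]
  rw [hblocks, det_submatrix_equiv_self, det_fromBlocks₁₁, det_fin_one,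
    lstsqResidual_dotProduct_mulVec hV]
  congr 1
  have hschur : cᵀ * A * V * ⅟(Vᵀ * A * V) * (Vᵀ * A * c)
      = cᵀ * (A * V * (Vᵀ * A * V)⁻¹ * Vᵀ * A) * c := by
    simp only [invOf_eq_nonsing_inv, Matrix.mul_assoc]
  rw [Matrix.sub_apply, hschur, hquad, hquad]
  simp only [lstsqCoeff, mulVec_mulVec, Matrix.mul_assoc]

section Estimates

variable {m ι : Type*} [Fintype m] [Fintype ι]

theorem Matrix.PosDef.transpose_mul_mul_same {A : Matrix m m ℝ} (hA : A.PosDef)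
    {V : Matrix m ι ℝ} (hV : LinearIndependent ℝ V.col) : (Vᵀ * A * V).PosDef := by
  simpa [conjTranspose_eq_transpose_of_trivial] using
    hA.conjTranspose_mul_mul_same (mulVec_injective_iff.mpr hV)

variable [DecidableEq m] [DecidableEq ι]

theorem factorial_card_mul_det_transpose_mul_diagonal_mul (V U : Matrix m ι ℝ) (y : m → ℝ) :
    ((Fintype.card ι).factorial : ℝ) * (Vᵀ * diagonal y * U).det
      = ∑ r : ι → m, (∏ j, y (r j)) * ((V.submatrix r id).det * (U.submatrix r id).det) := by
  rw [factorial_card_mul_det_mul]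
  refine Finset.sum_congr rfl fun r _ => ?_
  have : (Vᵀ * diagonal y).submatrix id r = (V.submatrix r id)ᵀ * diagonal fun j => y (r j) := by
    ext j k
    simp [mul_diagonal]
  rw [this, det_mul, det_transpose, det_diagonal]
  ring

/-- A summand with `(V.submatrix r id).det = 0`, where the junk value `x / 0 = 0` occurs, also
vanishes in the Cauchy–Binet expansion of the left-hand side. -/
theorem abs_det_transpose_mul_diagonal_mul_le (V U : Matrix m ι ℝ) {y : m → ℝ} (hy : 0 ≤ y) :
    |(Vᵀ * diagonal y * U).det|
      ≤ (∑ r : ι → m, |(U.submatrix r id).det| / |(V.submatrix r id).det|)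
        * (Vᵀ * diagonal y * V).det := by
  set κ := ∑ r : ι → m, |(U.submatrix r id).det| / |(V.submatrix r id).det|
  have hterm : ∀ r : ι → m,
      |(V.submatrix r id).det * (U.submatrix r id).det| ≤ κ * (V.submatrix r id).det ^ 2 := by
    intro r
    have hr : |(U.submatrix r id).det| / |(V.submatrix r id).det| ≤ κ :=
      Finset.single_le_sum (f := fun r => |(U.submatrix r id).det| / |(V.submatrix r id).det|)
        (fun r _ => by positivity) (Finset.mem_univ r)
    calc |(V.submatrix r id).det * (U.submatrix r id).det|
        = |(U.submatrix r id).det| / |(V.submatrix r id).det| * (V.submatrix r id).det ^ 2 := by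
          rcases eq_or_ne (V.submatrix r id).det 0 with h | h
          · simp [h]
          · rw [abs_mul, ← sq_abs (V.submatrix r id).det]
            field_simp
      _ ≤ κ * (V.submatrix r id).det ^ 2 := by gcongr
  have hfac : (0 : ℝ) < (Fintype.card ι).factorial := by positivity
  refine le_of_mul_le_mul_left ?_ hfac
  calc ((Fintype.card ι).factorial : ℝ) * |(Vᵀ * diagonal y * U).det|
      = |∑ r : ι → m, (∏ j, y (r j)) * ((V.submatrix r id).det * (U.submatrix r id).det)| := by
        rw [← factorial_card_mul_det_transpose_mul_diagonal_mul, abs_mul, abs_of_pos hfac]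
    _ ≤ ∑ r : ι → m, (∏ j, y (r j)) * (κ * (V.submatrix r id).det ^ 2) := by
        refine (Finset.abs_sum_le_sum_abs _ _).trans (Finset.sum_le_sum fun r _ => ?_)
        have hy' : 0 ≤ ∏ j, y (r j) := Finset.prod_nonneg fun j _ => hy (r j)
        rw [abs_mul, abs_of_nonneg hy']
        exact mul_le_mul_of_nonneg_left (hterm r) hy'
    _ = (Fintype.card ι).factorial * (κ * (Vᵀ * diagonal y * V).det) := by
        rw [mul_left_comm, factorial_card_mul_det_transpose_mul_diagonal_mul, Finset.mul_sum]
        exact Finset.sum_congr rfl fun r _ => by ring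

theorem abs_lstsqCoeff_diagonal_le (V : Matrix m ι ℝ) (a : m → ℝ) {y : m → ℝ} (hy : 0 ≤ y)
    (hdet : 0 < (Vᵀ * diagonal y * V).det) (k : ι) :
    |lstsqCoeff V (diagonal y) a k|
      ≤ ∑ r : ι → m, |((V.updateCol k a).submatrix r id).det| / |(V.submatrix r id).det| := by
  have hcramer : (Vᵀ * diagonal y * V).det * lstsqCoeff V (diagonal y) a k
      = (Vᵀ * diagonal y * V.updateCol k a).det := by
    rw [mul_updateCol, ← mulVec_mulVec, ← cramer_apply, ← det_smul_inv_mulVec_eq_cramer _ _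
      (isUnit_iff_ne_zero.mpr hdet.ne')]
    rfl
  rw [← mul_le_mul_iff_of_pos_left hdet, ← abs_of_pos hdet, ← abs_mul, hcramer, abs_of_pos hdet,
    mul_comm]
  exact abs_det_transpose_mul_diagonal_mul_le V _ hy

theorem exists_sum_abs_lstsqResidual_diagonal_le {V : Matrix m ι ℝ}
    (hV : LinearIndependent ℝ V.col) (a : m → ℝ) :
    ∃ ρ, ∀ y : m → ℝ, (∀ i, 0 < y i) → ∑ i, |lstsqResidual V (diagonal y) a i| ≤ ρ := by
  set κ : ι → ℝ := fun k =>
    ∑ r : ι → m, |((V.updateCol k a).submatrix r id).det| / |(V.submatrix r id).det|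
  refine ⟨∑ i, (|a i| + ∑ k, |V i k| * κ k), fun y hy => Finset.sum_le_sum fun i _ => ?_⟩
  have hdet := ((PosDef.diagonal hy).transpose_mul_mul_same hV).det_pos
  have hcoeff k := abs_lstsqCoeff_diagonal_le V a (fun i => (hy i).le) hdet k
  calc |lstsqResidual V (diagonal y) a i|
      ≤ |a i| + ∑ k, |V i k * lstsqCoeff V (diagonal y) a k| :=
        (abs_sub _ _).trans (add_le_add le_rfl (Finset.abs_sum_le_sum_abs _ _))
    _ ≤ |a i| + ∑ k, |V i k| * κ k := by
        gcongr with k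
        rw [abs_mul]
        exact mul_le_mul_of_nonneg_left (hcoeff k) (abs_nonneg _)

end Estimates

section Perturbation

variable {m : Type*} [Fintype m]

theorem abs_dotProduct_mulVec_le {n : Type*} [Fintype n] {Z : Matrix m n ℝ} {K : ℝ}
    (hZ : ∀ i j, |Z i j| ≤ K) (x : m → ℝ) (w : n → ℝ) :
    |x ⬝ᵥ (Z *ᵥ w)| ≤ K * (∑ i, |x i|) * ∑ j, |w j| := by
  calc |x ⬝ᵥ (Z *ᵥ w)| = |∑ i, ∑ j, x i * Z i j * w j| := by
        simp only [dotProduct, mulVec, Finset.mul_sum, mul_assoc]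
    _ ≤ ∑ i, ∑ j, |x i| * K * |w j| := by
        refine (Finset.abs_sum_le_sum_abs _ _).trans (Finset.sum_le_sum fun i _ => ?_)
        refine (Finset.abs_sum_le_sum_abs _ _).trans (Finset.sum_le_sum fun j _ => ?_)
        rw [abs_mul, abs_mul]
        gcongr
        exact hZ i j
    _ = K * (∑ i, |x i|) * ∑ j, |w j| := by
        rw [mul_assoc, Finset.sum_mul_sum, Finset.mul_sum]
        refine Finset.sum_congr rfl fun i _ => ?_
        rw [Finset.mul_sum]
        exact Finset.sum_congr rfl fun j _ => by ring

variable {Z : Matrix m m ℝ} {K : ℝ}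

section Residuals

variable {ι : Type*} [Fintype ι] [DecidableEq ι] {V : Matrix m ι ℝ} {A : Matrix m m ℝ}

theorem lstsqResidual_sub_lstsqResidual (B : Matrix m m ℝ) (a : m → ℝ) :
    lstsqResidual V A a - lstsqResidual V B a = V *ᵥ (lstsqCoeff V B a - lstsqCoeff V A a) := by
  simp only [lstsqResidual, mulVec_sub]
  abel

theorem lstsqResidual_form_sub_eq (hsym : (A + Z)ᵀ = A + Z) (hA : IsUnit (Vᵀ * A * V).det)
    (hAZ : IsUnit (Vᵀ * (A + Z) * V).det) (a : m → ℝ) :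
    lstsqResidual V A a ⬝ᵥ (A *ᵥ lstsqResidual V A a)
        - lstsqResidual V (A + Z) a ⬝ᵥ ((A + Z) *ᵥ lstsqResidual V (A + Z) a)
      = -(lstsqResidual V (A + Z) a ⬝ᵥ (Z *ᵥ lstsqResidual V A a)) := by
  set r₁ := lstsqResidual V A a
  set r₂ := lstsqResidual V (A + Z) a
  have hu : r₁ - r₂ = V *ᵥ _ := lstsqResidual_sub_lstsqResidual (A + Z) a
  have horth₁ : (r₁ - r₂) ⬝ᵥ (A *ᵥ r₁) = 0 := hu ▸ dotProduct_mulVec_lstsqResidual_eq_zero hA a _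
  have horth₂ : r₂ ⬝ᵥ ((A + Z) *ᵥ (r₁ - r₂)) = 0 := by
    rw [dotProduct_mulVec, ← mulVec_transpose, hsym, dotProduct_comm, hu,
      dotProduct_mulVec_lstsqResidual_eq_zero hAZ]
  rw [mulVec_sub, dotProduct_sub, sub_eq_zero] at horth₂
  rw [sub_dotProduct, sub_eq_zero] at horth₁
  rw [horth₁, ← horth₂, add_mulVec, dotProduct_add]
  ring

theorem sum_abs_lstsqResidual_add_le (hK : 0 ≤ K) (hZ : ∀ i j, |Z i j| ≤ K)
    (hA : IsUnit (Vᵀ * A * V).det) (hAZ : IsUnit (Vᵀ * (A + Z) * V).det)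
    (hcoer : ∀ x, (∑ i, |x i|) ^ 2 ≤ x ⬝ᵥ ((A + Z) *ᵥ x)) (a : m → ℝ) :
    ∑ i, |lstsqResidual V (A + Z) a i| ≤ (1 + K) * ∑ i, |lstsqResidual V A a i| := by
  set r₁ := lstsqResidual V A a
  set r₂ := lstsqResidual V (A + Z) a
  set u := r₁ - r₂
  have hu : u = V *ᵥ _ := lstsqResidual_sub_lstsqResidual (A + Z) a
  have horth₁ : u ⬝ᵥ (A *ᵥ r₁) = 0 := hu ▸ dotProduct_mulVec_lstsqResidual_eq_zero hA a _
  have horth₂ : u ⬝ᵥ ((A + Z) *ᵥ r₂) = 0 := hu ▸ dotProduct_mulVec_lstsqResidual_eq_zero hAZ a _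
  have hform : u ⬝ᵥ ((A + Z) *ᵥ u) = u ⬝ᵥ (Z *ᵥ r₁) := by
    rw [mulVec_sub, dotProduct_sub, horth₂, sub_zero, add_mulVec, dotProduct_add, horth₁,
      zero_add]
  have hu_le : ∑ i, |u i| ≤ K * ∑ i, |r₁ i| := by
    have h := (hcoer u).trans (hform ▸ (le_abs_self _).trans (abs_dotProduct_mulVec_le hZ u r₁))
    rcases (Finset.sum_nonneg fun i _ => abs_nonneg (u i)).eq_or_lt with h0 | h0
    · rw [← h0]
      positivity
    · exact le_of_mul_le_mul_left (by nlinarith) h0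
  calc ∑ i, |r₂ i| = ∑ i, |r₁ i - u i| := by simp [u]
    _ ≤ ∑ i, (|r₁ i| + |u i|) := Finset.sum_le_sum fun i _ => abs_sub _ _
    _ ≤ (1 + K) * ∑ i, |r₁ i| := by rw [Finset.sum_add_distrib]; linarith

theorem abs_lstsqResidual_form_sub_le (hK : 0 ≤ K) (hZ : ∀ i j, |Z i j| ≤ K)
    (hsym : (A + Z)ᵀ = A + Z) (hA : IsUnit (Vᵀ * A * V).det)
    (hAZ : IsUnit (Vᵀ * (A + Z) * V).det)
    (hcoer : ∀ x, (∑ i, |x i|) ^ 2 ≤ x ⬝ᵥ ((A + Z) *ᵥ x)) (a : m → ℝ) :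
    |lstsqResidual V A a ⬝ᵥ (A *ᵥ lstsqResidual V A a)
        - lstsqResidual V (A + Z) a ⬝ᵥ ((A + Z) *ᵥ lstsqResidual V (A + Z) a)|
      ≤ K * (1 + K) * (∑ i, |lstsqResidual V A a i|) ^ 2 := by
  rw [lstsqResidual_form_sub_eq hsym hA hAZ, abs_neg]
  calc _ ≤ K * (∑ i, |lstsqResidual V (A + Z) a i|) * ∑ i, |lstsqResidual V A a i| :=
        abs_dotProduct_mulVec_le hZ _ _
    _ ≤ K * ((1 + K) * ∑ i, |lstsqResidual V A a i|) * ∑ i, |lstsqResidual V A a i| := by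
        gcongr
        exact sum_abs_lstsqResidual_add_le hK hZ hA hAZ hcoer a
    _ = K * (1 + K) * (∑ i, |lstsqResidual V A a i|) ^ 2 := by ring

end Residuals

variable [DecidableEq m] {y : m → ℝ}

theorem sq_sum_abs_le_dotProduct_diagonal_add_mulVec (hK : 0 ≤ K) (hZ : ∀ i j, |Z i j| ≤ K)
    (hy : ∀ i, Fintype.card m * (K + 1) ≤ y i) (x : m → ℝ) :
    (∑ i, |x i|) ^ 2 ≤ x ⬝ᵥ ((diagonal y + Z) *ᵥ x) := by
  have hdiag : x ⬝ᵥ (diagonal y *ᵥ x) = ∑ i, y i * x i ^ 2 := by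
    simp only [dotProduct, mulVec_diagonal]
    exact Finset.sum_congr rfl fun i _ => by ring
  have hcard : (∑ i, |x i|) ^ 2 ≤ Fintype.card m * ∑ i, x i ^ 2 := by
    simpa using sq_sum_le_card_mul_sum_sq (s := Finset.univ) (f := fun i => |x i|)
  have hlarge : Fintype.card m * (K + 1) * ∑ i, x i ^ 2 ≤ ∑ i, y i * x i ^ 2 := by
    rw [Finset.mul_sum]
    gcongr with i
    exact hy i
  have hZx := neg_abs_le (x ⬝ᵥ (Z *ᵥ x))
  have hZx' := abs_dotProduct_mulVec_le hZ x x
  rw [add_mulVec, dotProduct_add, hdiag]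
  nlinarith [mul_le_mul_of_nonneg_left hcard (by linarith : (0 : ℝ) ≤ K + 1)]

theorem posDef_diagonal_add (hZsym : Zᵀ = Z) (hK : 0 ≤ K) (hZ : ∀ i j, |Z i j| ≤ K)
    (hy : ∀ i, Fintype.card m * (K + 1) ≤ y i) : (diagonal y + Z).PosDef := by
  refine PosDef.of_dotProduct_mulVec_pos ?_ fun x hx => ?_
  · exact isHermitian_iff_isSymm.mpr (by rw [IsSymm, transpose_add, diagonal_transpose, hZsym])
  · obtain ⟨i, hi⟩ := Function.ne_iff.mp hx
    have hsum : 0 < ∑ i, |x i| :=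
      Finset.sum_pos' (fun _ _ => abs_nonneg _) ⟨i, Finset.mem_univ i, abs_pos.mpr hi⟩
    simpa using (pow_pos hsum 2).trans_le
      (sq_sum_abs_le_dotProduct_diagonal_add_mulVec hK hZ hy x)

end Perturbation

theorem stability_of_symanzik_ratios_general {n p : ℕ} {T : Type*}
    (V : Matrix (Fin n) (Fin p) ℝ) (a : Fin n → ℝ)
    (hV : LinearIndependent ℝ (fun j => Vᵀ j))
    (y : T → Fin n → ℝ)
    (Z : T → Matrix (Fin n) (Fin n) ℝ)
    (hZsym : ∀ t, (Z t)ᵀ = Z t)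
    (hZbdd : ∃ K : ℝ, ∀ t i j, |Z t i j| ≤ K) :
    ∃ c C : ℝ, 0 < c ∧ 0 < C ∧ ∀ t, (∀ i, C ≤ y t i) →
      |((snocCol V a)ᵀ * Matrix.diagonal (y t) * snocCol V a).det /
          (Vᵀ * Matrix.diagonal (y t) * V).det
        - ((snocCol V a)ᵀ * (Matrix.diagonal (y t) + Z t) * snocCol V a).det /
          (Vᵀ * (Matrix.diagonal (y t) + Z t) * V).det| ≤ c := by
  obtain ⟨K₀, hK₀⟩ := hZbdd
  set K := max K₀ 0
  have hK : 0 ≤ K := le_max_right _ _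
  have hZ t i j : |Z t i j| ≤ K := (hK₀ t i j).trans (le_max_left _ _)
  obtain ⟨ρ, hρ⟩ := exists_sum_abs_lstsqResidual_diagonal_le hV a
  refine ⟨K * (1 + K) * ρ ^ 2 + 1, n * (K + 1) + 1, by positivity, by positivity, fun t ht => ?_⟩
  have hlarge : ∀ i, (Fintype.card (Fin n) : ℝ) * (K + 1) ≤ y t i := fun i => by
    rw [Fintype.card_fin]; linarith [ht i]
  have hpos : ∀ i, 0 < y t i := fun i => lt_of_lt_of_le (by positivity) (ht i)
  have hdet := ((PosDef.diagonal hpos).transpose_mul_mul_same hV).det_pos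
  have hdet' := ((posDef_diagonal_add (hZsym t) hK (hZ t) hlarge).transpose_mul_mul_same hV).det_pos
  have hsym : (diagonal (y t) + Z t)ᵀ = diagonal (y t) + Z t := by
    rw [transpose_add, diagonal_transpose, hZsym]
  rw [det_snocCol_gram V a _ hdet.ne'.isUnit, det_snocCol_gram V a _ hdet'.ne'.isUnit,
    mul_div_cancel_left₀ _ hdet.ne', mul_div_cancel_left₀ _ hdet'.ne']
  calc _ ≤ K * (1 + K) * (∑ i, |lstsqResidual V (diagonal (y t)) a i|) ^ 2 :=
        abs_lstsqResidual_form_sub_le hK (hZ t) hsym hdet.ne'.isUnit hdet'.ne'.isUnit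
          (sq_sum_abs_le_dotProduct_diagonal_add_mulVec hK (hZ t) hlarge) a
    _ ≤ K * (1 + K) * ρ ^ 2 := by
        gcongr
        exact hρ _ hpos
    _ ≤ K * (1 + K) * ρ ^ 2 + 1 := by linarith

/-- stability of Symanzik rational fractions of order 2: with `v` a free
family of vectors (the columns of `V`), `a` independent from `v`, `W = V ⋆ (a)`,
`y(t)` positive weights, and `Z(t)` a bounded family of symmetric matrices such that
`Vᵀ(Y(t)+Z(t))V` is positive definite for large weights, there are constants `c, C > 0`
such that whenever all `yᵢ(t) ≥ C`,
`|det(WᵀY(t)W)/det(VᵀY(t)V) − det(Wᵀ(Y(t)+Z(t))W)/det(Vᵀ(Y(t)+Z(t))V)| ≤ c`. -/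
theorem stability_of_symanzik_ratios {n p : ℕ} {T : Type*}
    (V : Matrix (Fin n) (Fin p) ℝ) (a : Fin n → ℝ)
    (hV : LinearIndependent ℝ (fun j => Vᵀ j))
    (ha : a ∉ Submodule.span ℝ (Set.range fun j => Vᵀ j))
    (y : T → Fin n → ℝ) (hy : ∀ t i, 0 < y t i)
    (Z : T → Matrix (Fin n) (Fin n) ℝ)
    (hZsym : ∀ t, (Z t)ᵀ = Z t)
    (hZbdd : ∃ K : ℝ, ∀ t i j, |Z t i j| ≤ K)
    (hpos : ∃ C₀ : ℝ, ∀ t, (∀ i, C₀ ≤ y t i) →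
      (Vᵀ * (Matrix.diagonal (y t) + Z t) * V).PosDef) :
    ∃ c C : ℝ, 0 < c ∧ 0 < C ∧ ∀ t, (∀ i, C ≤ y t i) →
      |((snocCol V a)ᵀ * Matrix.diagonal (y t) * snocCol V a).det /
          (Vᵀ * Matrix.diagonal (y t) * V).det
        - ((snocCol V a)ᵀ * (Matrix.diagonal (y t) + Z t) * snocCol V a).det /
          (Vᵀ * (Matrix.diagonal (y t) + Z t) * V).det| ≤ c :=
  stability_of_symanzik_ratios_general V a hV y Z hZsym hZbdd
end
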